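/- arXiv:2407.02635 — 6 statements merged into one kernel-verified Lean document; each statement's English description precedes it below -/
import Mathlib

section
/- If k ≥ 3 and n > k(k+2) (with k < n/2), then the generalized Petersen graph GP(n,k) is not distance-balanced. -/
/-!
Take the spoke `u₀v₀`. Lifting walks to the lattice `ℤ²` (net numbers `a` of inner and `b` of
outer steps) shows that the distance from a vertex over `x` to `u₀` or `v₀` is at least
`|a| + |b|`, plus the number of spokes that must be crossed, for some `x ≡ a k + b (mod n)`;
explicit walks give matching upper bounds. For `n > k(k+2)` this makes `v₀` strictly closer
than `u₀` to every outer vertex `u_x` with `|x| > ⌊(k+2)/2⌋` and to the `k + 3` inner vertices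
`v_{ak}`, `-⌊(k+2)/2⌋ ≤ a ≤ ⌊(k+3)/2⌋`. Hence `|W_{v₀u₀}| > n` when `k` is odd, while for
even `k` we get `|W_{v₀u₀}| ≥ n` and `u_{k/2+1}` is equidistant from `u₀` and `v₀`; either
way `|W_{u₀v₀}| < |W_{v₀u₀}|`.
-/

/-- The generalized Petersen graph `GP(n,k)`: vertices are `Sum.inl i` (the outer
vertices `u_i`) and `Sum.inr i` (the inner vertices `v_i`) for `i ∈ ZMod n`, with
edges `u_i u_{i+1}`, `v_i v_{i+k}` and spokes `u_i v_i`. -/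
def genPetersen (n k : ℕ) : SimpleGraph (ZMod n ⊕ ZMod n) :=
  SimpleGraph.fromRel (fun x y =>
    match x, y with
    | Sum.inl i, Sum.inl j => j = i + 1
    | Sum.inr i, Sum.inr j => j = i + (k : ZMod n)
    | Sum.inl i, Sum.inr j => i = j
    | _, _ => False)

/-- `W_{xy}`: the set of vertices strictly closer to `x` than to `y`. -/
def closerSet {V : Type*} (G : SimpleGraph V) (x y : V) : Set V :=
  {w | G.dist w x < G.dist w y}

/-- `_xW_y`: the set of vertices equidistant from `x` and `y`. -/
def eqDistSet {V : Type*} (G : SimpleGraph V) (x y : V) : Set V :=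
  {w | G.dist w x = G.dist w y}

/-- A graph is `ℓ`-distance-balanced if every pair of vertices at distance `ℓ`
is balanced. -/
def IsLDistBalanced {V : Type*} (G : SimpleGraph V) (ℓ : ℕ) : Prop :=
  ∀ x y : V, G.dist x y = ℓ → (closerSet G x y).ncard = (closerSet G y x).ncard

/-- A graph is distance-balanced if every pair of adjacent vertices is balanced. -/
def IsDistBalanced {V : Type*} (G : SimpleGraph V) : Prop :=
  ∀ x y : V, G.Adj x y → (closerSet G x y).ncard = (closerSet G y x).ncard

open SimpleGraph Sum Finset

section

variable {V : Type*} (G : SimpleGraph V)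

theorem ncard_closerSet_add_ncard_closerSet_add_ncard_eqDistSet [Finite V] (x y : V) :
    (closerSet G x y).ncard + (closerSet G y x).ncard + (eqDistSet G x y).ncard = Nat.card V := by
  have hcloser : Disjoint (closerSet G x y) (closerSet G y x) :=
    Set.disjoint_left.2 fun w (h : G.dist w x < G.dist w y) h' => lt_asymm h h'
  have heq : Disjoint (closerSet G x y ∪ closerSet G y x) (eqDistSet G x y) :=
    Set.disjoint_left.2 fun _ h h' => h.elim h'.not_lt h'.symm.not_lt
  rw [← Set.ncard_union_eq hcloser, ← Set.ncard_union_eq heq, ← Set.ncard_univ]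
  congr 1
  ext w
  simp only [closerSet, eqDistSet, Set.mem_union, Set.mem_ofPred_eq, Set.mem_univ, iff_true]
  omega

theorem SimpleGraph.exists_walk_length_eq_natAbs {A : Type*} [AddGroup A] (f : A → V) (d : A)
    (hf : ∀ i, G.Adj (f i) (f (i + d))) (m : ℤ) (i : A) :
    ∃ p : G.Walk (f i) (f (i + m • d)), p.length = m.natAbs := by
  have hnat : ∀ (m : ℕ) (i : A), ∃ p : G.Walk (f i) (f (i + m • d)), p.length = m := by
    intro m
    induction m with
    | zero => exact fun i => ⟨Walk.nil.copy rfl (by simp), by simp⟩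
    | succ m ih =>
      intro i
      obtain ⟨p, hp⟩ := ih (i + d)
      exact ⟨(Walk.cons (hf i) p).copy rfl (by rw [add_assoc, ← succ_nsmul']), by simp [hp]⟩
  obtain ⟨m, rfl | rfl⟩ := Int.eq_nat_or_neg m
  · rw [natCast_zsmul, Int.natAbs_natCast]
    exact hnat m i
  · obtain ⟨p, hp⟩ := hnat m (i + (-(m : ℤ)) • d)
    refine ⟨(p.copy rfl ?_).reverse, by simp [hp]⟩
    rw [add_assoc, neg_zsmul, natCast_zsmul, neg_add_cancel, add_zero]

theorem SimpleGraph.Reachable.induction_on_dist {P : V → ℕ → Prop} {u v : V}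
    (h : G.Reachable u v) (hv : P v 0) (step : ∀ x y L, G.Adj x y → P y L → P x (L + 1)) :
    P u (G.dist u v) := by
  obtain ⟨p, hp⟩ := h.exists_walk_length_eq_dist
  rw [← hp]
  clear hp h
  induction p with
  | nil => exact hv
  | cons hadj _ ih => exact step _ _ _ hadj (ih hv)

end

theorem Int.eq_of_intCast_eq_of_abs_sub_lt {n : ℕ} {x y : ℤ} (h : (x : ZMod n) = y)
    (hlt : |y - x| < n) : x = y := by
  have := Int.eq_zero_of_abs_lt_dvd ((ZMod.intCast_eq_intCast_iff_dvd_sub x y n).1 h) hlt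
  omega

lemma ZMod.le_card_filter_lt_natAbs_valMinAbs {n : ℕ} [NeZero n] (c : ℕ) :
    n ≤ #{x : ZMod n | c < x.valMinAbs.natAbs} + (2 * c + 1) := by
  have hsub : ({x : ZMod n | c < x.valMinAbs.natAbs} : Finset (ZMod n))ᶜ ⊆
      (Icc (-(c : ℤ)) c).image (↑) := by
    intro x hx
    rw [mem_compl, mem_filter, not_and_or, not_lt] at hx
    simp only [mem_univ, not_true_eq_false, false_or] at hx
    exact mem_image.2 ⟨x.valMinAbs, mem_Icc.2 (by omega), x.coe_valMinAbs⟩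
  have hcompl := card_le_card hsub
  have himage := card_image_le (s := Icc (-(c : ℤ)) c) (f := ((↑) : ℤ → ZMod n))
  rw [card_compl, ZMod.card] at hcompl
  rw [Int.card_Icc] at himage
  omega

namespace GenPetersen

variable {n k : ℕ}

@[simp]
lemma adj_inl_inl {i j : ZMod n} :
    (genPetersen n k).Adj (inl i) (inl j) ↔ i ≠ j ∧ (j = i + 1 ∨ i = j + 1) := by
  simp [genPetersen]

@[simp]
lemma adj_inr_inr {i j : ZMod n} :
    (genPetersen n k).Adj (inr i) (inr j) ↔ i ≠ j ∧ (j = i + k ∨ i = j + k) := by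
  simp [genPetersen]

@[simp]
lemma adj_inl_inr {i j : ZMod n} : (genPetersen n k).Adj (inl i) (inr j) ↔ i = j := by
  simp [genPetersen]

@[simp]
lemma adj_inr_inl {i j : ZMod n} : (genPetersen n k).Adj (inr i) (inl j) ↔ i = j := by
  simpa [genPetersen] using eq_comm

lemma adj_inl_add_one (hn : 1 < n) (i : ZMod n) :
    (genPetersen n k).Adj (inl i) (inl (i + 1)) := by
  have : (1 : ZMod n) ≠ 0 := by
    have : Fact (1 < n) := ⟨hn⟩
    exact one_ne_zero
  simpa using this

lemma adj_inr_add (hk : 0 < k) (hkn : k < n) (i : ZMod n) :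
    (genPetersen n k).Adj (inr i) (inr (i + k)) := by
  have : (k : ZMod n) ≠ 0 := by
    rw [Ne, ZMod.natCast_eq_zero_iff]
    exact Nat.not_dvd_of_pos_of_lt hk hkn
  simpa using this

lemma connected (hn : 1 < n) : (genPetersen n k).Connected := by
  have : NeZero n := ⟨by omega⟩
  refine (connected_iff_exists_forall_reachable _).2 ⟨inl 0, ?_⟩
  have houter (x : ZMod n) : (genPetersen n k).Reachable (inl 0) (inl x) := by
    obtain ⟨p, -⟩ := exists_walk_length_eq_natAbs _ inl 1 (adj_inl_add_one hn) x.val 0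
    simpa using p.reachable
  rintro (x | x)
  · exact houter x
  · exact (houter x).trans (adj_inl_inr.2 rfl).reachable

lemma dist_inl_add_le (hn : 1 < n) (b : ℤ) (i : ZMod n) :
    (genPetersen n k).dist (inl (i + b)) (inl i) ≤ b.natAbs := by
  obtain ⟨p, hp⟩ := exists_walk_length_eq_natAbs _ inl 1 (adj_inl_add_one hn) b i
  rw [dist_comm, ← hp]
  simpa using dist_le p

lemma dist_inr_add_mul_le (hk : 0 < k) (hkn : k < n) (a : ℤ) (i : ZMod n) :
    (genPetersen n k).dist (inr (i + a * k)) (inr i) ≤ a.natAbs := by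
  obtain ⟨p, hp⟩ := exists_walk_length_eq_natAbs _ inr (k : ZMod n) (adj_inr_add hk hkn) a i
  rw [dist_comm, ← hp]
  simpa [zsmul_eq_mul] using dist_le p

lemma dist_inl_inr_zero_le (hk : 0 < k) (hkn : k < n) (a b : ℤ) :
    (genPetersen n k).dist (inl ((a * k + b : ℤ) : ZMod n)) (inr 0) ≤
      a.natAbs + b.natAbs + 1 := by
  have hconn := connected (k := k) (by omega : 1 < n)
  have houter := dist_inl_add_le (k := k) (by omega) b ((a : ZMod n) * (k : ZMod n))
  have hspoke : (genPetersen n k).dist (inl (a * k : ZMod n)) (inr (a * k)) = 1 :=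
    dist_eq_one_iff_adj.2 (adj_inl_inr.2 rfl)
  have hinner := dist_inr_add_mul_le hk hkn a 0
  rw [zero_add] at hinner
  push_cast
  calc _ ≤ _ := hconn.dist_triangle
    _ ≤ _ := add_le_add houter (hconn.dist_triangle.trans (add_le_add hspoke.le hinner))
    _ = _ := by ring

/-- Lower bounds for `d(w, u₀)`: a walk from `w` to `u₀` making net `a` inner and `b` outer
steps starts over `x ≡ a k + b`, and if `a ≠ 0` it crosses at least two spokes. -/
def LowerBoundInl (k : ℕ) : ZMod n ⊕ ZMod n → ℕ → Prop
  | inl x, L => ∃ a b : ℤ, ((a * k + b : ℤ) : ZMod n) = x ∧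
      a.natAbs + b.natAbs + (if a = 0 then 0 else 2) ≤ L
  | inr x, L => ∃ a b : ℤ, ((a * k + b : ℤ) : ZMod n) = x ∧ a.natAbs + b.natAbs + 1 ≤ L

def LowerBoundInr (k : ℕ) : ZMod n ⊕ ZMod n → ℕ → Prop
  | inl x, L => ∃ a b : ℤ, ((a * k + b : ℤ) : ZMod n) = x ∧ a.natAbs + b.natAbs + 1 ≤ L
  | inr x, L => ∃ a b : ℤ, ((a * k + b : ℤ) : ZMod n) = x ∧
      a.natAbs + b.natAbs + (if b = 0 then 0 else 2) ≤ L

lemma lowerBoundInl_step {x y : ZMod n ⊕ ZMod n} {L : ℕ} (hxy : (genPetersen n k).Adj x y)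
    (h : LowerBoundInl k y L) : LowerBoundInl k x (L + 1) := by
  rcases x with i | i <;> rcases y with j | j <;> obtain ⟨a, b, rfl, hL⟩ := h
  · obtain ⟨-, hj | rfl⟩ := adj_inl_inl.1 hxy
    · exact ⟨a, b - 1, by push_cast at hj ⊢; linear_combination hj,
        by split_ifs at hL ⊢ <;> omega⟩
    · exact ⟨a, b + 1, by push_cast; ring, by split_ifs at hL ⊢ <;> omega⟩
  · obtain rfl := adj_inl_inr.1 hxy
    exact ⟨a, b, rfl, by split_ifs <;> omega⟩
  · obtain rfl := adj_inr_inl.1 hxy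
    exact ⟨a, b, rfl, by split_ifs at hL <;> omega⟩
  · obtain ⟨-, hj | rfl⟩ := adj_inr_inr.1 hxy
    · exact ⟨a - 1, b, by push_cast at hj ⊢; linear_combination hj, by omega⟩
    · exact ⟨a + 1, b, by push_cast; ring, by omega⟩

lemma lowerBoundInr_step {x y : ZMod n ⊕ ZMod n} {L : ℕ} (hxy : (genPetersen n k).Adj x y)
    (h : LowerBoundInr k y L) : LowerBoundInr k x (L + 1) := by
  rcases x with i | i <;> rcases y with j | j <;> obtain ⟨a, b, rfl, hL⟩ := h
  · obtain ⟨-, hj | rfl⟩ := adj_inl_inl.1 hxy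
    · exact ⟨a, b - 1, by push_cast at hj ⊢; linear_combination hj, by omega⟩
    · exact ⟨a, b + 1, by push_cast; ring, by omega⟩
  · obtain rfl := adj_inl_inr.1 hxy
    exact ⟨a, b, rfl, by split_ifs at hL <;> omega⟩
  · obtain rfl := adj_inr_inl.1 hxy
    exact ⟨a, b, rfl, by split_ifs <;> omega⟩
  · obtain ⟨-, hj | rfl⟩ := adj_inr_inr.1 hxy
    · exact ⟨a - 1, b, by push_cast at hj ⊢; linear_combination hj,
        by split_ifs at hL ⊢ <;> omega⟩
    · exact ⟨a + 1, b, by push_cast; ring, by split_ifs at hL ⊢ <;> omega⟩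

lemma lowerBoundInl_dist (hn : 1 < n) (w : ZMod n ⊕ ZMod n) :
    LowerBoundInl k w ((genPetersen n k).dist w (inl 0)) :=
  (connected hn).preconnected w _ |>.induction_on_dist _ ⟨0, 0, by simp, by simp⟩
    fun _ _ _ ↦ lowerBoundInl_step

lemma lowerBoundInr_dist (hn : 1 < n) (w : ZMod n ⊕ ZMod n) :
    LowerBoundInr k w ((genPetersen n k).dist w (inr 0)) :=
  (connected hn).preconnected w _ |>.induction_on_dist _ ⟨0, 0, by simp, by simp⟩
    fun _ _ _ ↦ lowerBoundInr_step

lemma natAbs_le_of_intCast_eq_mul (hk : 0 < k) {a b a₀ : ℤ} (hn : k * (2 * a₀.natAbs) < n + k)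
    (h : ((a * k + b : ℤ) : ZMod n) = ((a₀ * k : ℤ) : ZMod n)) :
    a₀.natAbs ≤ a.natAbs + b.natAbs := by
  by_contra! hlt
  have hk' : (1 : ℤ) ≤ k := by exact_mod_cast hk
  have hn' : (k : ℤ) * (2 * |a₀|) < n + k := by rw [← Int.natCast_natAbs]; exact_mod_cast hn
  have hlt' : |a| + |b| + 1 ≤ |a₀| := by zify at hlt; omega
  have hexact : a * k + b = a₀ * k := by
    refine Int.eq_of_intCast_eq_of_abs_sub_lt h ?_
    have hdiff : |a₀ * k - (a * k + b)| ≤ (|a₀| + |a|) * k + |b| := by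
      calc |a₀ * k - (a * k + b)| = |(a₀ - a) * k - b| := by ring_nf
        _ ≤ |a₀ - a| * k + |b| := by
          simpa [abs_mul] using abs_sub (((a₀ - a) * k)) b
        _ ≤ (|a₀| + |a|) * k + |b| := by gcongr; exact abs_sub _ _
    nlinarith [abs_nonneg b]
  have hb : |b| = |a₀ - a| * k := by
    rw [show b = (a₀ - a) * k by linarith, abs_mul, Nat.abs_cast]
  have : |a₀| - |a| ≤ |a₀ - a| := abs_sub_abs_le_abs_sub a₀ a
  nlinarith [abs_nonneg (a₀ - a)]

lemma le_natAbs_add_natAbs_of_intCast_eq (hk : 0 < k) {s : ℕ} (hs : 2 * s ≤ k + 2)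
    (hn : s * k < n) {a b : ℤ} (ha : a ≠ 0) (h : ((a * k + b : ℤ) : ZMod n) = (s : ℤ)) :
    s ≤ a.natAbs + b.natAbs + 1 := by
  by_contra! hlt
  have hk' : (1 : ℤ) ≤ k := by exact_mod_cast hk
  have hn' : (s : ℤ) * k < n := by exact_mod_cast hn
  have hs' : 2 * (s : ℤ) ≤ k + 2 := by exact_mod_cast hs
  have hlt' : |a| + |b| + 2 ≤ s := by zify at hlt; omega
  have ha' : 1 ≤ |a| := Int.one_le_abs ha
  have hexact : a * k + b = s := by
    refine Int.eq_of_intCast_eq_of_abs_sub_lt h ?_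
    have hdiff : |s - (a * k + b)| ≤ s + |a| * k + |b| := by
      calc |s - (a * k + b)| ≤ |(s : ℤ)| + |a * k + b| := abs_sub _ _
        _ ≤ s + (|a| * k + |b|) := by
          rw [Nat.abs_cast]
          gcongr
          simpa [abs_mul] using abs_add_le (a * k) b
        _ = _ := by ring
    nlinarith [abs_nonneg b]
  have hb : |a| * k - s ≤ |b| := by
    have := abs_sub_abs_le_abs_sub (a * k) (s : ℤ)
    rw [abs_mul, Nat.abs_cast, Nat.abs_cast, show a * k - s = -b by linarith, abs_neg] at this
    exact this
  nlinarith

lemma dist_inl_inr_zero_le_of_valMinAbs (hk : 0 < k) (hkn : k < n) (x : ZMod n) :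
    (genPetersen n k).dist (inl x) (inr 0) ≤ ((x.valMinAbs.natAbs : ℤ) - k).natAbs + 2 := by
  rcases Int.natAbs_eq x.valMinAbs with hv | hv
  · have h := dist_inl_inr_zero_le (n := n) hk hkn 1 (x.valMinAbs - k)
    rw [show 1 * (k : ℤ) + (x.valMinAbs - k) = x.valMinAbs by ring, ZMod.coe_valMinAbs] at h
    omega
  · have h := dist_inl_inr_zero_le (n := n) hk hkn (-1) (x.valMinAbs + k)
    rw [show -1 * (k : ℤ) + (x.valMinAbs + k) = x.valMinAbs by ring, ZMod.coe_valMinAbs] at h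
    omega

lemma dist_inl_inr_zero_lt (hk : 3 ≤ k) (hkn : k < n) {x : ZMod n}
    (hx : (k + 2) / 2 < x.valMinAbs.natAbs) :
    (genPetersen n k).dist (inl x) (inr 0) < (genPetersen n k).dist (inl x) (inl 0) := by
  have : NeZero n := ⟨by omega⟩
  obtain ⟨a, b, hab, hL⟩ := lowerBoundInl_dist (k := k) (by omega) (inl x)
  by_cases ha : a = 0
  · subst ha
    have hb : x.valMinAbs.natAbs ≤ b.natAbs :=
      ZMod.natAbs_min_of_le_div_two n _ _ (by simpa using hab.symm) x.natAbs_valMinAbs_le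
    have := dist_inl_inr_zero_le_of_valMinAbs (by omega) hkn x
    omega
  · have := dist_inl_inr_zero_le (n := n) (by omega) hkn a b
    rw [hab] at this
    simp only [ha, if_false] at hL
    omega

lemma dist_inr_inr_zero_lt (hk : 0 < k) (hkn : k < n) {a₀ : ℤ}
    (hn : k * (2 * a₀.natAbs) < n + k) :
    (genPetersen n k).dist (inr ((a₀ * k : ℤ) : ZMod n)) (inr 0) <
      (genPetersen n k).dist (inr ((a₀ * k : ℤ) : ZMod n)) (inl 0) := by
  obtain ⟨a, b, hab, hL⟩ :=
    lowerBoundInl_dist (k := k) (by omega) (inr ((a₀ * k : ℤ) : ZMod n))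
  have hlow := natAbs_le_of_intCast_eq_mul hk hn hab
  have hup := dist_inr_add_mul_le hk hkn a₀ 0
  rw [zero_add, ← Int.cast_natCast, ← Int.cast_mul] at hup
  omega

lemma dist_inl_inl_zero_eq_dist_inl_inr_zero (hke : Even k) (hk : 0 < k)
    (hn : k * (k + 2) < n) :
    (genPetersen n k).dist (inl ((k / 2 + 1 : ℕ) : ZMod n)) (inl 0) =
      (genPetersen n k).dist (inl ((k / 2 + 1 : ℕ) : ZMod n)) (inr 0) := by
  set s := k / 2 + 1
  -- both distances turn out to be `s`
  have hke : k % 2 = 0 := Nat.even_iff.1 hke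
  have hkn : k < n := by nlinarith
  have hsk : s * k < n := by nlinarith [Nat.mul_le_mul_right k (by omega : s ≤ k + 2)]
  have hsn : 2 * s ≤ n := by nlinarith [Nat.mul_le_mul_left s (by omega : 2 ≤ k)]
  have hlow {a b : ℤ} (h : ((a * k + b : ℤ) : ZMod n) = s) :
      s ≤ a.natAbs + b.natAbs + (if a = 0 then 0 else 1) := by
    by_cases ha : a = 0
    · subst ha
      have := ZMod.natAbs_min_of_le_div_two n s b (by simpa using h.symm) (by omega)
      simp only [if_true]
      omega
    · simp only [ha, if_false]
      exact le_natAbs_add_natAbs_of_intCast_eq hk (by omega) hsk ha (by rw [h, Int.cast_natCast])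
  have hout := dist_inl_add_le (n := n) (k := k) (by omega) s 0
  have hin := dist_inl_inr_zero_le (n := n) hk hkn 1 (s - k)
  rw [zero_add, Int.cast_natCast] at hout
  rw [show (1 : ℤ) * k + (s - k) = (s : ℤ) by ring, Int.cast_natCast] at hin
  obtain ⟨a, b, hab, hL⟩ := lowerBoundInl_dist (k := k) (by omega) (inl (s : ZMod n))
  obtain ⟨a', b', hab', hL'⟩ := lowerBoundInr_dist (k := k) (by omega) (inl (s : ZMod n))
  have h := hlow hab
  have h' := hlow hab'
  split_ifs at hL h h' <;> omega

lemma card_image_Icc_mul (hk : 0 < k) {p q : ℤ} (hn : k * (q - p) < n) :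
    ((Icc p q).image fun a : ℤ ↦ ((a * k : ℤ) : ZMod n)).card = (q + 1 - p).toNat := by
  rw [card_image_of_injOn, Int.card_Icc]
  intro a ha a' ha' h
  simp only [coe_Icc, Set.mem_Icc] at ha ha'
  have hk' : (0 : ℤ) < k := by exact_mod_cast hk
  refine mul_right_cancel₀ hk'.ne' (Int.eq_of_intCast_eq_of_abs_sub_lt h ?_)
  rw [← sub_mul, abs_mul, Nat.abs_cast]
  have : |a' - a| ≤ q - p := abs_sub_le_iff.2 ⟨by linarith, by linarith⟩
  nlinarith

lemma le_ncard_closerSet_inr_zero (hk : 3 ≤ k) (hn : k * (k + 2) < n) :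
    n + (k + 3) ≤
      (closerSet (genPetersen n k) (inr 0) (inl 0)).ncard + (2 * ((k + 2) / 2) + 1) := by
  have : NeZero n := ⟨by nlinarith⟩
  have hkn : k < n := by nlinarith
  set c := (k + 2) / 2
  set outer : Finset (ZMod n) := {x | c < x.valMinAbs.natAbs}
  set inner : Finset (ZMod n) :=
    (Icc (-(c : ℤ)) (k + 2 - c)).image fun a : ℤ ↦ ((a * k : ℤ) : ZMod n)
  have hsub : ↑(outer.disjSum inner) ⊆ closerSet (genPetersen n k) (inr 0) (inl 0) := by
    rintro (x | x) hx
    · rw [mem_coe, inl_mem_disjSum] at hx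
      exact dist_inl_inr_zero_lt hk hkn (mem_filter.1 hx).2
    · rw [mem_coe, inr_mem_disjSum] at hx
      obtain ⟨a, ha, rfl⟩ := mem_image.1 hx
      rw [mem_Icc] at ha
      exact dist_inr_inr_zero_lt (by omega) hkn
        (by nlinarith [Nat.mul_le_mul_left k (by omega : 2 * a.natAbs ≤ k + 3)])
  have hinner : inner.card = k + 3 := by
    rw [card_image_Icc_mul (by omega) (by nlinarith)]
    omega
  have hcard := Set.ncard_le_ncard hsub
  rw [Set.ncard_coe_finset, card_disjSum, hinner] at hcard
  have houter : n ≤ outer.card + (2 * c + 1) := ZMod.le_card_filter_lt_natAbs_valMinAbs c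
  omega

end GenPetersen

open GenPetersen in
theorem stmt_2_general (n k : ℕ) (hk : 3 ≤ k) (hn : k * (k + 2) < n) :
    ¬ IsDistBalanced (genPetersen n k) := by
  intro hbal
  have : NeZero n := ⟨by omega⟩
  have hpart := ncard_closerSet_add_ncard_closerSet_add_ncard_eqDistSet (genPetersen n k)
    (inl 0) (inr 0)
  rw [hbal _ _ (adj_inl_inr.2 rfl), Nat.card_sum, Nat.card_zmod] at hpart
  have hcount := le_ncard_closerSet_inr_zero hk hn
  rcases Nat.even_or_odd k with heven | hodd
  · have hmid : 0 < (eqDistSet (genPetersen n k) (inl 0) (inr 0)).ncard :=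
      (Set.ncard_pos (Set.toFinite _)).2
        ⟨_, dist_inl_inl_zero_eq_dist_inl_inr_zero heven (by omega) hn⟩
    have := Nat.even_iff.1 heven
    omega
  · have := Nat.odd_iff.1 hodd
    omega

theorem stmt_2 (n k : ℕ) (hk : 3 ≤ k) (hn : k * (k + 2) < n) (hkn : 2 * k < n) :
    ¬ IsDistBalanced (genPetersen n k) :=
  stmt_2_general n k hk hn
end

section
/- For every integer k ≥ 3, the generalized Petersen graph GP(k(k+2), k) is distance-balanced. -/
/-!
Rotations `i ↦ i + t` and reflections `i ↦ c - i` are automorphisms of `GP(n,k)`. A reflection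
swaps the ends of any outer or inner edge and a rotation moves any spoke to `u₀v₀`, so only the
spoke `u₀v₀` has to be checked.

For `n = k(k+2)` write `|j|` for the circular norm on `ℤ/n` and `M j` for the word norm of `j`
with respect to `±1, ±k`. Then `d(u_j,u₀) = min(|j|, M j + 2)`, `d(v_j,u₀) = d(u_j,v₀) = M j + 1`,
and `d(v_j,v₀)` is `M j` if `k ∣ j` and `M j + 2` otherwise: each formula vanishes only at the
base point, is 1-Lipschitz along edges, and decreases along some edge at every other vertex.
Since `M j = |j|` exactly when `|j| ≤ ⌊(k+1)/2⌋`, and `M j ≤ |j| - 2` exactly when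
`|j| > ⌊(k+2)/2⌋`, the vertices closer to `u₀` are the `2⌊(k+1)/2⌋ + 1` outer vertices with
`|j| ≤ ⌊(k+1)/2⌋` and the `n - (k+2)` inner vertices with `k ∤ j`, while those closer to `v₀` are
the `n - 2⌊(k+2)/2⌋ - 1` outer vertices with `|j| > ⌊(k+2)/2⌋` and the `k + 2` inner vertices
with `k ∣ j`. The two counts agree because `⌊(k+1)/2⌋ + ⌊(k+2)/2⌋ = k + 1`.
-/

open Function

namespace SimpleGraph

variable {V V' : Type*} {G : SimpleGraph V} {G' : SimpleGraph V'}

theorem dist_eq_of_descent {x : V} (D : V → ℕ) (hx : D x = 0)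
    (lip : ∀ a b, G.Adj a b → D a ≤ D b + 1)
    (desc : ∀ w, w ≠ x → ∃ w', G.Adj w w' ∧ D w' < D w) (w : V) :
    G.dist w x = D w := by
  have lower : ∀ {u v : V} (p : G.Walk u v), D u ≤ p.length + D v := by
    intro u v p
    induction p with
    | nil => simp
    | cons h _ ih => have := lip _ _ h; rw [Walk.length_cons]; omega
  have upper : ∀ m w, D w = m → G.Reachable w x ∧ G.dist w x ≤ m := by
    intro m
    induction m using Nat.strong_induction_on with
    | _ m ih =>
      intro w hw
      by_cases hwx : w = x
      · subst hwx; simp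
      obtain ⟨w', hadj, hlt⟩ := desc w hwx
      obtain ⟨hr, hd⟩ := ih _ (hw ▸ hlt) w' rfl
      obtain ⟨p, hp⟩ := hr.exists_walk_length_eq_dist
      have := dist_le (Walk.cons hadj p)
      rw [Walk.length_cons] at this
      exact ⟨hadj.reachable.trans hr, by omega⟩
  obtain ⟨hr, hd⟩ := upper _ w rfl
  obtain ⟨p, hp⟩ := hr.exists_walk_length_eq_dist
  have := lower p
  omega

theorem Iso.dist_le (σ : G ≃g G') (u v : V) : G'.dist (σ u) (σ v) ≤ G.dist u v := by
  by_cases h : G.Reachable u v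
  · obtain ⟨p, hp⟩ := h.exists_walk_length_eq_dist
    simpa [hp] using SimpleGraph.dist_le (p.map σ.toHom)
  · rw [dist_eq_zero_of_not_reachable h, dist_eq_zero_of_not_reachable]
    exact fun h' => h (by simpa using h'.map σ.symm.toHom)

theorem Iso.dist_eq (σ : G ≃g G') (u v : V) : G'.dist (σ u) (σ v) = G.dist u v :=
  (σ.dist_le u v).antisymm (by simpa using σ.symm.dist_le (σ u) (σ v))

theorem closerSet_iso (σ : G ≃g G') (x y : V) :
    closerSet G' (σ x) (σ y) = σ '' closerSet G x y := by
  ext w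
  obtain ⟨w, rfl⟩ := σ.surjective w
  simp [closerSet, σ.dist_eq]

theorem ncard_closerSet_iso (σ : G ≃g G') (x y : V) :
    (closerSet G' (σ x) (σ y)).ncard = (closerSet G x y).ncard := by
  rw [closerSet_iso, Set.ncard_image_of_injective _ σ.injective]

theorem ncard_closerSet_eq_of_swap (σ : G ≃g G) {x y : V} (hx : σ x = y) (hy : σ y = x) :
    (closerSet G x y).ncard = (closerSet G y x).ncard := by
  rw [← ncard_closerSet_iso σ, hx, hy]

end SimpleGraph

namespace ZMod

variable {m : ℕ}

def circNorm (x : ZMod m) : ℕ := x.valMinAbs.natAbs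

@[simp] lemma circNorm_eq_zero {x : ZMod m} : circNorm x = 0 ↔ x = 0 := by
  simp [circNorm, valMinAbs_eq_zero]

@[simp] lemma circNorm_zero : circNorm (0 : ZMod m) = 0 := circNorm_eq_zero.2 rfl

@[simp] lemma circNorm_neg (x : ZMod m) : circNorm (-x) = circNorm x := natAbs_valMinAbs_neg x

lemma circNorm_add_le (x y : ZMod m) : circNorm (x + y) ≤ circNorm x + circNorm y :=
  (natAbs_valMinAbs_add_le x y).trans (Int.natAbs_add_le _ _)

lemma circNorm_le_add_sub (x y : ZMod m) : circNorm x ≤ circNorm y + circNorm (x - y) := by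
  simpa using circNorm_add_le y (x - y)

lemma circNorm_sub_comm (x y : ZMod m) : circNorm (x - y) = circNorm (y - x) := by
  rw [← neg_sub, circNorm_neg]

lemma circNorm_natCast_of_two_mul_le {a : ℕ} (h : 2 * a ≤ m) : circNorm (a : ZMod m) = a := by
  rw [circNorm, valMinAbs_natCast_of_le_half (by omega), Int.natAbs_natCast]

lemma eq_natCast_circNorm_or_eq_neg (x : ZMod m) :
    x = (circNorm x : ZMod m) ∨ x = -(circNorm x : ZMod m) := by
  rcases Int.natAbs_eq x.valMinAbs with h | h <;>
    [left; right] <;> conv_lhs => rw [← coe_valMinAbs x, h]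
  all_goals simp [circNorm]

section NeZero

variable [NeZero m]

lemma circNorm_one_le : circNorm (1 : ZMod m) ≤ 1 := by
  rw [circNorm, valMinAbs_natAbs_eq_min]
  exact (min_le_left _ _).trans (by rw [val_one_eq_one_mod]; exact Nat.mod_le 1 m)

lemma circNorm_le_one_of_eq_one_or_eq_neg_one {s : ZMod m} (hs : s = 1 ∨ s = -1) :
    circNorm s ≤ 1 := by
  rcases hs with rfl | rfl <;> simp [circNorm_one_le]

lemma two_mul_circNorm_le (x : ZMod m) : 2 * circNorm x ≤ m := by
  have := natAbs_valMinAbs_le x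
  rw [circNorm]; omega

lemma exists_circNorm_add_lt {x : ZMod m} (hx : x ≠ 0) :
    ∃ s : ZMod m, (s = 1 ∨ s = -1) ∧ circNorm (x + s) < circNorm x := by
  have hv : x.valMinAbs ≠ 0 := by rwa [Ne, valMinAbs_eq_zero]
  have hI := valMinAbs_mem_Ioc x
  rw [Set.mem_Ioc] at hI
  rcases hv.lt_or_gt with hneg | hpos
  · refine ⟨1, Or.inl rfl, ?_⟩
    have : (x + 1).valMinAbs = x.valMinAbs + 1 :=
      (valMinAbs_spec _ _).2 ⟨by push_cast; ring, by rw [Set.mem_Ioc]; omega⟩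
    rw [circNorm, circNorm, this]; omega
  · refine ⟨-1, Or.inr rfl, ?_⟩
    have : (x + -1).valMinAbs = x.valMinAbs - 1 :=
      (valMinAbs_spec _ _).2 ⟨by push_cast; ring, by rw [Set.mem_Ioc]; omega⟩
    rw [circNorm, circNorm, this]; omega

lemma ncard_circNorm_le {t : ℕ} (ht : 2 * t < m) :
    {x : ZMod m | circNorm x ≤ t}.ncard = 2 * t + 1 := by
  have himage : valMinAbs '' {x : ZMod m | circNorm x ≤ t} = Set.Icc (-t : ℤ) t := by
    ext z
    constructor
    · rintro ⟨x, hx, rfl⟩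
      simp only [Set.mem_ofPred_eq, circNorm] at hx
      rw [Set.mem_Icc]; omega
    · intro hz
      rw [Set.mem_Icc] at hz
      have hspec : (z : ZMod m).valMinAbs = z :=
        (valMinAbs_spec _ _).2 ⟨rfl, by rw [Set.mem_Ioc]; omega⟩
      exact ⟨z, by simp only [Set.mem_ofPred_eq, circNorm, hspec]; omega, hspec⟩
  rw [← Set.ncard_image_of_injective _ injective_valMinAbs, himage, ← Finset.coe_Icc,
    Set.ncard_coe_finset, Int.card_Icc]
  omega

end NeZero

end ZMod

namespace Set

lemma ncard_eq_ncard_preimage_inl_add {α β : Type*} [Finite α] [Finite β] (s : Set (α ⊕ β)) :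
    s.ncard = (Sum.inl ⁻¹' s).ncard + (Sum.inr ⁻¹' s).ncard := by
  conv_lhs => rw [← image_preimage_inl_union_image_preimage_inr s]
  rw [ncard_union_eq disjoint_image_inl_image_inr, ncard_image_of_injective _ Sum.inl_injective,
    ncard_image_of_injective _ Sum.inr_injective]

end Set

open Sum SimpleGraph ZMod

namespace genPetersen

variable {n k : ℕ}

@[simp] lemma adj_inl_inl {i j : ZMod n} :
    (genPetersen n k).Adj (inl i) (inl j) ↔ i ≠ j ∧ (j = i + 1 ∨ i = j + 1) := by
  simp [genPetersen]

@[simp] lemma adj_inr_inr {i j : ZMod n} :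
    (genPetersen n k).Adj (inr i) (inr j) ↔ i ≠ j ∧ (j = i + k ∨ i = j + k) := by
  simp [genPetersen]

@[simp] lemma adj_inl_inr {i j : ZMod n} : (genPetersen n k).Adj (inl i) (inr j) ↔ i = j := by
  simp [genPetersen]

@[simp] lemma adj_inr_inl {i j : ZMod n} : (genPetersen n k).Adj (inr i) (inl j) ↔ i = j := by
  simp [genPetersen, eq_comm]

def rotate (t : ZMod n) : genPetersen n k ≃g genPetersen n k where
  toEquiv := Equiv.sumCongr (Equiv.addRight t) (Equiv.addRight t)
  map_rel_iff' := by
    rintro (i | i) (j | j) <;> simp [add_right_comm _ t]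

def reflect (c : ZMod n) : genPetersen n k ≃g genPetersen n k where
  toEquiv := Equiv.sumCongr (Equiv.subLeft c) (Equiv.subLeft c)
  map_rel_iff' := by
    rintro (i | i) (j | j) <;> simp <;> grind

@[simp] lemma rotate_inl (t i : ZMod n) : rotate (k := k) t (inl i) = inl (i + t) := rfl
@[simp] lemma rotate_inr (t i : ZMod n) : rotate (k := k) t (inr i) = inr (i + t) := rfl
@[simp] lemma reflect_inl (c i : ZMod n) : reflect (k := k) c (inl i) = inl (c - i) := rfl
@[simp] lemma reflect_inr (c i : ZMod n) : reflect (k := k) c (inr i) = inr (c - i) := rfl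

theorem isDistBalanced_of_spoke
    (h : (closerSet (genPetersen n k) (inl 0) (inr 0)).ncard =
      (closerSet (genPetersen n k) (inr 0) (inl 0)).ncard) :
    IsDistBalanced (genPetersen n k) := by
  have spoke (i : ZMod n) : (closerSet (genPetersen n k) (inl i) (inr i)).ncard =
      (closerSet (genPetersen n k) (inr i) (inl i)).ncard := by
    have hu := ncard_closerSet_iso (rotate (k := k) i) (inl 0) (inr 0)
    have hv := ncard_closerSet_iso (rotate (k := k) i) (inr 0) (inl 0)
    simp only [rotate_inl, rotate_inr, zero_add] at hu hv
    rw [hu, hv, h]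
  rintro (i | i) (j | j) hadj
  · exact ncard_closerSet_eq_of_swap (reflect (i + j)) (by simp) (by simp)
  · obtain rfl := adj_inl_inr.1 hadj
    exact spoke i
  · obtain rfl := adj_inr_inl.1 hadj
    exact (spoke i).symm
  · exact ncard_closerSet_eq_of_swap (reflect (i + j)) (by simp) (by simp)

lemma adj_inl_add {j s : ZMod n} (hs : s = 1 ∨ s = -1) (h0 : s ≠ 0) :
    (genPetersen n k).Adj (inl j) (inl (j + s)) := by
  rw [adj_inl_inl]
  refine ⟨by simpa using h0, ?_⟩
  rcases hs with rfl | rfl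
  · exact Or.inl rfl
  · exact Or.inr (by ring)

lemma adj_inr_add {j s : ZMod n} (hs : s = k ∨ s = -k) (h0 : s ≠ 0) :
    (genPetersen n k).Adj (inr j) (inr (j + s)) := by
  rw [adj_inr_inr]
  refine ⟨by simpa using h0, ?_⟩
  rcases hs with rfl | rfl
  · exact Or.inl rfl
  · exact Or.inr (by ring)

lemma sumElim_le_of_adj {f g : ZMod n → ℕ}
    (hf : ∀ j s, (s = 1 ∨ s = -1) → f (j + s) ≤ f j + 1)
    (hg : ∀ j s, (s = (k : ZMod n) ∨ s = -k) → g (j + s) ≤ g j + 1)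
    (hfg : ∀ j, f j ≤ g j + 1 ∧ g j ≤ f j + 1) {a b : ZMod n ⊕ ZMod n}
    (h : (genPetersen n k).Adj a b) : Sum.elim f g a ≤ Sum.elim f g b + 1 := by
  rcases a with i | i <;> rcases b with j | j <;> simp only [adj_inl_inl, adj_inr_inr,
    adj_inl_inr, adj_inr_inl, Sum.elim_inl, Sum.elim_inr] at h ⊢
  · obtain ⟨-, rfl | rfl⟩ := h
    · simpa using hf (i + 1) (-1) (Or.inr rfl)
    · exact hf j 1 (Or.inl rfl)
  · exact h ▸ (hfg i).1
  · exact h ▸ (hfg i).2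
  · obtain ⟨-, rfl | rfl⟩ := h
    · simpa using hg (i + k) (-k) (Or.inr rfl)
    · exact hg j k (Or.inl rfl)

end genPetersen

section WordNorm

variable {k : ℕ}

def kMul (k : ℕ) : ZMod (k + 2) →+ ZMod (k * (k + 2)) :=
  ZMod.lift (k + 2) ⟨zmultiplesHom _ (k : ZMod (k * (k + 2))), by
    rw [zmultiplesHom_apply, natCast_zsmul, nsmul_eq_mul, ← Nat.cast_mul, mul_comm,
      natCast_self]⟩

lemma kMul_intCast (z : ℤ) : kMul k z = z * k := by
  simp [kMul, zsmul_eq_mul]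

lemma kMul_natCast (a : ℕ) : kMul k a = a * k := by
  simpa using kMul_intCast (k := k) a

lemma kMul_one : kMul k 1 = k := by
  simpa using kMul_natCast (k := k) 1

lemma kMul_eq_or_eq_neg {t : ZMod (k + 2)} (ht : t = 1 ∨ t = -1) :
    kMul k t = k ∨ kMul k t = -k := by
  rcases ht with rfl | rfl <;> simp [kMul_one]

lemma exists_kMul_eq {s : ZMod (k * (k + 2))} (hs : s = k ∨ s = -k) :
    ∃ t : ZMod (k + 2), (t = 1 ∨ t = -1) ∧ kMul k t = s := by
  rcases hs with rfl | rfl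
  exacts [⟨1, Or.inl rfl, kMul_one⟩, ⟨-1, Or.inr rfl, by simp [kMul_one]⟩]

lemma circNorm_kMul [NeZero k] (a : ZMod (k + 2)) : circNorm (kMul k a) = k * circNorm a := by
  have h : (kMul k a).valMinAbs = k * a.valMinAbs := by
    have hI := valMinAbs_mem_Ioc a
    have hk : (0 : ℤ) < k := by exact_mod_cast Nat.pos_of_ne_zero (NeZero.ne k)
    rw [Set.mem_Ioc] at hI
    rw [valMinAbs_spec, Set.mem_Ioc]
    refine ⟨?_, ?_, ?_⟩
    · conv_lhs => rw [← coe_valMinAbs a, kMul_intCast]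
      push_cast; ring
    · push_cast at hI ⊢; nlinarith [mul_lt_mul_of_pos_left hI.1 hk]
    · push_cast at hI ⊢; nlinarith [mul_le_mul_of_nonneg_left hI.2 hk.le]
  rw [circNorm, h, Int.natAbs_mul, Int.natAbs_natCast, circNorm]

lemma kMul_injective [NeZero k] : Injective (kMul k) := by
  refine (injective_iff_map_eq_zero _).2 fun a ha => ?_
  have h := circNorm_kMul a
  rw [ha, circNorm_zero, eq_comm, mul_eq_zero] at h
  exact circNorm_eq_zero.1 (h.resolve_left (NeZero.ne k))

/-- The word norm of `j` in `ℤ/(k(k+2))` for the generators `±1, ±k`: if the letters `±k` of a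
word add up to `kMul k a`, there are at least `circNorm a` of them. -/
def wordNorm (k : ℕ) (j : ZMod (k * (k + 2))) : ℕ :=
  Finset.univ.inf' Finset.univ_nonempty
    fun a : ZMod (k + 2) => circNorm a + circNorm (j - kMul k a)

lemma wordNorm_le (j : ZMod (k * (k + 2))) (a : ZMod (k + 2)) :
    wordNorm k j ≤ circNorm a + circNorm (j - kMul k a) :=
  Finset.inf'_le _ (Finset.mem_univ a)

lemma exists_wordNorm_eq (j : ZMod (k * (k + 2))) :
    ∃ a, wordNorm k j = circNorm a + circNorm (j - kMul k a) := by
  obtain ⟨a, -, h⟩ := Finset.exists_mem_eq_inf' (Finset.univ_nonempty (α := ZMod (k + 2)))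
    fun a => circNorm a + circNorm (j - kMul k a)
  exact ⟨a, h⟩

lemma le_wordNorm {j : ZMod (k * (k + 2))} {c : ℕ}
    (h : ∀ a, c ≤ circNorm a + circNorm (j - kMul k a)) : c ≤ wordNorm k j :=
  Finset.le_inf' _ _ fun a _ => h a

lemma wordNorm_le_circNorm (j : ZMod (k * (k + 2))) : wordNorm k j ≤ circNorm j := by
  simpa using wordNorm_le j 0

lemma wordNorm_add_le (j s : ZMod (k * (k + 2))) :
    wordNorm k (j + s) ≤ wordNorm k j + circNorm s := by
  obtain ⟨a, ha⟩ := exists_wordNorm_eq j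
  have h := wordNorm_le (j + s) a
  rw [add_sub_right_comm] at h
  have := circNorm_add_le (j - kMul k a) s
  omega

lemma wordNorm_add_kMul_le (j : ZMod (k * (k + 2))) (b : ZMod (k + 2)) :
    wordNorm k (j + kMul k b) ≤ wordNorm k j + circNorm b := by
  obtain ⟨a, ha⟩ := exists_wordNorm_eq j
  have h := wordNorm_le (j + kMul k b) (a + b)
  rw [map_add, add_sub_add_right_eq_sub] at h
  have := circNorm_add_le a b
  omega

lemma wordNorm_add_le_of_eq_k_or_eq_neg_k {j s : ZMod (k * (k + 2))} (hs : s = k ∨ s = -k) :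
    wordNorm k (j + s) ≤ wordNorm k j + 1 := by
  obtain ⟨t, ht, rfl⟩ := exists_kMul_eq hs
  have := circNorm_le_one_of_eq_one_or_eq_neg_one ht
  have := wordNorm_add_kMul_le j t
  omega

lemma wordNorm_neg (j : ZMod (k * (k + 2))) : wordNorm k (-j) = wordNorm k j := by
  have key (j : ZMod (k * (k + 2))) : wordNorm k (-j) ≤ wordNorm k j := by
    obtain ⟨a, ha⟩ := exists_wordNorm_eq j
    have h := wordNorm_le (-j) (-a)
    rwa [map_neg, neg_sub_neg, circNorm_neg, circNorm_sub_comm, ← ha] at h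
  exact (key j).antisymm (by simpa using key (-j))

lemma wordNorm_kMul [NeZero k] (a : ZMod (k + 2)) : wordNorm k (kMul k a) = circNorm a := by
  refine le_antisymm (by simpa using wordNorm_le (kMul k a) a) (le_wordNorm fun b => ?_)
  rw [← map_sub, circNorm_kMul]
  have := circNorm_le_add_sub a b
  have := Nat.le_mul_of_pos_left (circNorm (a - b)) (Nat.pos_of_ne_zero (NeZero.ne k))
  omega

lemma min_le_wordNorm [NeZero k] (j : ZMod (k * (k + 2))) :
    min (circNorm j) (k + 1 - circNorm j) ≤ wordNorm k j := by
  refine le_wordNorm fun a => ?_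
  rcases eq_or_ne a 0 with rfl | ha
  · simp
  · -- a nonzero inner displacement `kMul k a` already has circular norm at least `k`
    have h := circNorm_le_add_sub (kMul k a) j
    rw [circNorm_kMul, circNorm_sub_comm] at h
    have h1 : 1 ≤ circNorm a := Nat.one_le_iff_ne_zero.2 (circNorm_eq_zero.not.2 ha)
    have h2 : k ≤ k * circNorm a := Nat.le_mul_of_pos_right k h1
    omega

lemma wordNorm_natCast_le (hk : 3 ≤ k) {w : ℕ} (hw : 2 * w ≤ k * (k + 2)) :
    wordNorm k w ≤ max (w - 2) (k + 1 - w) := by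
  rcases lt_or_ge w k with hwk | hwk
  · -- one step `+k` on the inner cycle, then `k - w` steps back on the outer one
    have h := wordNorm_le (w : ZMod (k * (k + 2))) 1
    rw [kMul_one, show (w : ZMod (k * (k + 2))) - k = -((k - w : ℕ) : ZMod (k * (k + 2))) by
      push_cast [hwk.le]; ring, circNorm_neg,
      circNorm_natCast_of_two_mul_le (by nlinarith [Nat.sub_le k w])] at h
    have := circNorm_one_le (m := k + 2)
    omega
  · -- `w / k` steps on the inner cycle, then `w % k` on the outer one
    have hdm := Nat.div_add_mod' w k
    have hr : w % k < k := Nat.mod_lt w (by omega)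
    have hq : 1 ≤ w / k := Nat.div_pos hwk (by omega)
    have hq2 : 2 * (w / k) ≤ k + 2 := Nat.le_of_mul_le_mul_left
      (show k * (2 * (w / k)) ≤ k * (k + 2) by nlinarith [Nat.div_mul_le_self w k]) (by omega)
    have h := wordNorm_le (w : ZMod (k * (k + 2))) (w / k : ℕ)
    rw [kMul_natCast, show (w : ZMod (k * (k + 2))) - (w / k : ℕ) * k = (w % k : ℕ) by
      rw [sub_eq_iff_eq_add', ← Nat.cast_mul, ← Nat.cast_add, hdm],
      circNorm_natCast_of_two_mul_le hq2,
      circNorm_natCast_of_two_mul_le (by nlinarith)] at h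
    have : 3 * (w / k) ≤ w / k * k := by nlinarith
    omega

lemma wordNorm_le_max (hk : 3 ≤ k) (j : ZMod (k * (k + 2))) :
    wordNorm k j ≤ max (circNorm j - 2) (k + 1 - circNorm j) := by
  have : NeZero k := ⟨by omega⟩
  have h : wordNorm k j = wordNorm k (circNorm j : ZMod (k * (k + 2))) := by
    rcases eq_natCast_circNorm_or_eq_neg j with h | h <;> conv_lhs => rw [h]
    exact wordNorm_neg _
  exact h ▸ wordNorm_natCast_le hk (two_mul_circNorm_le j)

lemma wordNorm_eq_circNorm_iff (hk : 3 ≤ k) {j : ZMod (k * (k + 2))} :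
    wordNorm k j = circNorm j ↔ circNorm j ≤ (k + 1) / 2 := by
  have : NeZero k := ⟨by omega⟩
  have := wordNorm_le_circNorm j
  have := min_le_wordNorm j
  have := wordNorm_le_max hk j
  omega

lemma wordNorm_add_two_le_iff (hk : 3 ≤ k) {j : ZMod (k * (k + 2))} :
    wordNorm k j + 2 ≤ circNorm j ↔ (k + 2) / 2 < circNorm j := by
  have : NeZero k := ⟨by omega⟩
  have := wordNorm_le_circNorm j
  have := min_le_wordNorm j
  have := wordNorm_le_max hk j
  omega

lemma exists_wordNorm_add_kMul_lt {j : ZMod (k * (k + 2))} (h : wordNorm k j < circNorm j) :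
    ∃ s : ZMod (k + 2), (s = 1 ∨ s = -1) ∧ wordNorm k (j + kMul k s) < wordNorm k j := by
  obtain ⟨a, ha⟩ := exists_wordNorm_eq j
  have ha0 : a ≠ 0 := by
    rintro rfl
    simp only [circNorm_zero, map_zero, sub_zero, zero_add] at ha
    omega
  obtain ⟨s, hs, hlt⟩ := exists_circNorm_add_lt ha0
  refine ⟨s, hs, ?_⟩
  have := wordNorm_le (j + kMul k s) (a + s)
  rw [map_add, add_sub_add_right_eq_sub] at this
  omega

lemma mem_range_or_exists_wordNorm_add_lt [NeZero k] (j : ZMod (k * (k + 2))) :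
    j ∈ (kMul k).range ∨
      ∃ s : ZMod (k * (k + 2)), (s = 1 ∨ s = -1) ∧ wordNorm k (j + s) < wordNorm k j := by
  obtain ⟨a, ha⟩ := exists_wordNorm_eq j
  by_cases h0 : j - kMul k a = 0
  · exact Or.inl ⟨a, (sub_eq_zero.1 h0).symm⟩
  obtain ⟨s, hs, hlt⟩ := exists_circNorm_add_lt h0
  refine Or.inr ⟨s, hs, ?_⟩
  have := wordNorm_le (j + s) a
  rw [add_sub_right_comm] at this
  omega

end WordNorm

namespace genPetersen

section Distances

variable {k : ℕ} [NeZero k]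

local notation "𝒢" => genPetersen (k * (k + 2)) k

def distU0 (k : ℕ) : ZMod (k * (k + 2)) ⊕ ZMod (k * (k + 2)) → ℕ :=
  Sum.elim (fun j => min (circNorm j) (wordNorm k j + 2)) (fun j => wordNorm k j + 1)

open Classical in
def distV0 (k : ℕ) : ZMod (k * (k + 2)) ⊕ ZMod (k * (k + 2)) → ℕ :=
  Sum.elim (fun j => wordNorm k j + 1)
    (fun j => if j ∈ (kMul k).range then wordNorm k j else wordNorm k j + 2)

lemma exists_adj_distU0_lt {w : ZMod (k * (k + 2)) ⊕ ZMod (k * (k + 2))} (hw : w ≠ inl 0) :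
    ∃ w', (𝒢).Adj w w' ∧ distU0 k w' < distU0 k w := by
  rcases w with j | j
  · by_cases h : circNorm j ≤ wordNorm k j + 2
    · obtain ⟨s, hs, hlt⟩ := exists_circNorm_add_lt (by simpa using hw : j ≠ 0)
      refine ⟨inl (j + s), adj_inl_add hs (by rintro rfl; simp at hlt), ?_⟩
      simp only [distU0, Sum.elim_inl]
      omega
    · refine ⟨inr j, adj_inl_inr.2 rfl, ?_⟩
      simp only [distU0, Sum.elim_inl, Sum.elim_inr]
      omega
  · by_cases h : circNorm j ≤ wordNorm k j
    · refine ⟨inl j, adj_inr_inl.2 rfl, ?_⟩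
      simp only [distU0, Sum.elim_inl, Sum.elim_inr]
      omega
    · obtain ⟨s, hs, hlt⟩ := exists_wordNorm_add_kMul_lt (not_le.1 h)
      refine ⟨inr (j + kMul k s),
        adj_inr_add (kMul_eq_or_eq_neg hs) (by intro h0; simp [h0] at hlt), ?_⟩
      simp only [distU0, Sum.elim_inr]
      omega

lemma exists_adj_distV0_lt {w : ZMod (k * (k + 2)) ⊕ ZMod (k * (k + 2))} (hw : w ≠ inr 0) :
    ∃ w', (𝒢).Adj w w' ∧ distV0 k w' < distV0 k w := by
  rcases w with j | j
  · rcases mem_range_or_exists_wordNorm_add_lt j with hj | ⟨s, hs, hlt⟩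
    · exact ⟨inr j, adj_inl_inr.2 rfl, by
        simp only [distV0, Sum.elim_inl, Sum.elim_inr, if_pos hj]; omega⟩
    · exact ⟨inl (j + s), adj_inl_add hs (by rintro rfl; simp at hlt),
        by simpa [distV0] using hlt⟩
  · by_cases hj : j ∈ (kMul k).range
    · obtain ⟨a, rfl⟩ := hj
      have ha : a ≠ 0 := by rintro rfl; simp at hw
      obtain ⟨s, hs, hlt⟩ := exists_circNorm_add_lt ha
      have hs0 : kMul k s ≠ 0 := (map_ne_zero_iff _ kMul_injective).2 (by rintro rfl; simp at hlt)
      refine ⟨inr (kMul k a + kMul k s), adj_inr_add (kMul_eq_or_eq_neg hs) hs0, ?_⟩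
      simp only [distV0, Sum.elim_inr]
      rwa [← map_add, if_pos ⟨a + s, rfl⟩, if_pos ⟨a, rfl⟩, wordNorm_kMul, wordNorm_kMul]
    · exact ⟨inl j, adj_inr_inl.2 rfl, by
        simp only [distV0, Sum.elim_inl, Sum.elim_inr, if_neg hj]; omega⟩

theorem dist_inl_zero (w : ZMod (k * (k + 2)) ⊕ ZMod (k * (k + 2))) :
    (𝒢).dist w (inl 0) = distU0 k w := by
  refine dist_eq_of_descent (distU0 k) (by simp [distU0])
    (fun a b h => sumElim_le_of_adj (fun j s hs => ?_) (fun j s hs => ?_)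
      (fun j => ?_) h) (fun w hw => exists_adj_distU0_lt hw) w
  · have := wordNorm_add_le j s
    have := circNorm_add_le j s
    have := circNorm_le_one_of_eq_one_or_eq_neg_one hs
    omega
  · have := wordNorm_add_le_of_eq_k_or_eq_neg_k (j := j) hs
    omega
  · have := wordNorm_le_circNorm j
    omega

theorem dist_inr_zero (w : ZMod (k * (k + 2)) ⊕ ZMod (k * (k + 2))) :
    (𝒢).dist w (inr 0) = distV0 k w := by
  refine dist_eq_of_descent (distV0 k) (by
    simp only [distV0, Sum.elim_inr, if_pos (zero_mem (kMul k).range)]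
    simpa using wordNorm_le_circNorm (k := k) 0)
    (fun a b h => sumElim_le_of_adj (fun j s hs => ?_) (fun j s hs => ?_)
      (fun j => ?_) h) (fun w hw => exists_adj_distV0_lt hw) w
  · have := wordNorm_add_le j s
    have := circNorm_le_one_of_eq_one_or_eq_neg_one hs
    omega
  · have hmem : j + s ∈ (kMul k).range ↔ j ∈ (kMul k).range := by
      obtain ⟨t, -, rfl⟩ := exists_kMul_eq hs
      exact AddSubgroup.add_mem_cancel_right _ ⟨t, rfl⟩
    have := wordNorm_add_le_of_eq_k_or_eq_neg_k (j := j) hs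
    simp only [hmem]
    split_ifs <;> omega
  · split_ifs <;> omega

end Distances

section Counting

variable {k : ℕ}

local notation "𝒢" => genPetersen (k * (k + 2)) k

lemma ncard_closerSet_inl_inr (hk : 3 ≤ k) :
    (closerSet 𝒢 (inl 0) (inr 0)).ncard = 2 * ((k + 1) / 2) + 1 + (k * (k + 2) - (k + 2)) := by
  have : NeZero k := ⟨by omega⟩
  have hu : inl ⁻¹' closerSet 𝒢 (inl 0) (inr 0) = {j | circNorm j ≤ (k + 1) / 2} := by
    ext j
    have := wordNorm_le_circNorm j
    simp only [closerSet, Set.mem_preimage, Set.mem_ofPred_eq, dist_inl_zero, dist_inr_zero,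
      distU0, distV0, Sum.elim_inl, ← wordNorm_eq_circNorm_iff hk]
    omega
  have hv : inr ⁻¹' closerSet 𝒢 (inl 0) (inr 0) = ((kMul k).range : Set _)ᶜ := by
    ext j
    simp only [closerSet, Set.mem_preimage, Set.mem_ofPred_eq, dist_inl_zero, dist_inr_zero,
      distU0, distV0, Sum.elim_inr, Set.mem_compl_iff, SetLike.mem_coe]
    split_ifs <;> simp_all
  rw [Set.ncard_eq_ncard_preimage_inl_add, hu, hv,
    ncard_circNorm_le ((Nat.mul_div_le _ 2).trans_lt (by nlinarith)), Set.ncard_compl,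
    AddMonoidHom.coe_range, Set.ncard_range_of_injective kMul_injective,
    Nat.card_zmod, Nat.card_zmod]

lemma ncard_closerSet_inr_inl (hk : 3 ≤ k) :
    (closerSet 𝒢 (inr 0) (inl 0)).ncard = k * (k + 2) - (2 * ((k + 2) / 2) + 1) + (k + 2) := by
  have : NeZero k := ⟨by omega⟩
  have hu : inl ⁻¹' closerSet 𝒢 (inr 0) (inl 0) = {j | circNorm j ≤ (k + 2) / 2}ᶜ := by
    ext j
    simp only [closerSet, Set.mem_preimage, Set.mem_ofPred_eq, dist_inl_zero, dist_inr_zero,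
      distU0, distV0, Sum.elim_inl, Set.mem_compl_iff, not_le, ← wordNorm_add_two_le_iff hk]
    omega
  have hv : inr ⁻¹' closerSet 𝒢 (inr 0) (inl 0) = (kMul k).range := by
    ext j
    simp only [closerSet, Set.mem_preimage, Set.mem_ofPred_eq, dist_inl_zero, dist_inr_zero,
      distU0, distV0, Sum.elim_inr, SetLike.mem_coe]
    split_ifs <;> simp_all
  rw [Set.ncard_eq_ncard_preimage_inl_add, hu, hv, Set.ncard_compl,
    ncard_circNorm_le ((Nat.mul_div_le _ 2).trans_lt (by nlinarith)), AddMonoidHom.coe_range,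
    Set.ncard_range_of_injective kMul_injective, Nat.card_zmod, Nat.card_zmod]

end Counting

end genPetersen

theorem stmt_3 (k : ℕ) (hk : 3 ≤ k) :
    IsDistBalanced (genPetersen (k * (k + 2)) k) := by
  refine genPetersen.isDistBalanced_of_spoke ?_
  rw [genPetersen.ncard_closerSet_inl_inr hk, genPetersen.ncard_closerSet_inr_inl hk]
  have : k + 3 ≤ k * (k + 2) := by nlinarith
  omega
end

section
/- If n > 10, then the generalized Petersen graph GP(n,2) is not distance-balanced. -/
/-!
Look at the spoke `u_0 v_0` and count `W_{u_0 v_0}` and `W_{v_0 u_0}` on the rim and on the inner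
cycle separately. The distances to `u_0` and to `v_0` have closed forms (`distU0`, `distV0`); they
are certified by the fact that a labelling which vanishes at the target, changes by at most one
along edges, and drops along some edge at every other vertex is the graph distance. By these
formulas only `u_{-1}, u_0, u_1` on the rim are closer to `u_0`, whereas `u_4, …, u_7` are closer to
`v_0` as soon as `n ≥ 11`. On the inner cycle, `v_j` is closer to `u_0` exactly when the shorter
route from `v_j` to `v_0` has odd length, and the rotation `v_i ↦ v_{i+1}` flips that parity, so it
maps the inner part of `W_{u_0 v_0}` injectively into `W_{v_0 u_0}`.
-/

namespace SimpleGraph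

variable {V : Type*} {G : SimpleGraph V} {f : V → ℕ}

theorem le_add_length_of_lipschitz (hf : ∀ a b, G.Adj a b → f a ≤ f b + 1) {x y : V}
    (p : G.Walk x y) : f x ≤ f y + p.length := by
  induction p with
  | nil => simp
  | cons h _ ih =>
    have := hf _ _ h
    rw [Walk.length_cons]
    omega

theorem exists_walk_length_le_of_descent {y : V} (hf : ∀ x, x ≠ y → ∃ z, G.Adj x z ∧ f z < f x)
    (x : V) : ∃ p : G.Walk x y, p.length ≤ f x := by
  induction hm : f x using Nat.strong_induction_on generalizing x with
  | _ m ih =>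
    by_cases hxy : x = y
    · subst hxy
      exact ⟨.nil, Nat.zero_le _⟩
    obtain ⟨z, hxz, hz⟩ := hf x hxy
    obtain ⟨p, hp⟩ := ih (f z) (hm ▸ hz) z rfl
    exact ⟨.cons hxz p, by rw [Walk.length_cons]; omega⟩

theorem dist_eq_of_lipschitz_of_descent {y : V} (hy : f y = 0)
    (hlip : ∀ a b, G.Adj a b → f a ≤ f b + 1) (hdesc : ∀ x, x ≠ y → ∃ z, G.Adj x z ∧ f z < f x)
    (x : V) : G.dist x y = f x := by
  obtain ⟨p, hp⟩ := exists_walk_length_le_of_descent hdesc x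
  obtain ⟨q, hq⟩ := Reachable.exists_walk_length_eq_dist ⟨p⟩
  have hlower := le_add_length_of_lipschitz hlip q
  have hupper := dist_le p
  omega

theorem le_add_one_of_fromRel_adj {r : V → V → Prop}
    (hr : ∀ a b, r a b → f a ≤ f b + 1 ∧ f b ≤ f a + 1) {a b : V} (hab : (fromRel r).Adj a b) :
    f a ≤ f b + 1 := by
  obtain ⟨-, h | h⟩ := hab
  exacts [(hr a b h).1, (hr b a h).2]

end SimpleGraph

theorem Set.ncard_eq_ncard_preimage_inl_add_ncard_preimage_inr {α β : Type*} [Finite α]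
    [Finite β] (s : Set (α ⊕ β)) : s.ncard = (Sum.inl ⁻¹' s).ncard + (Sum.inr ⁻¹' s).ncard := by
  conv_lhs => rw [← Set.image_preimage_inl_union_image_preimage_inr s]
  rw [Set.ncard_union_eq Set.disjoint_image_inl_image_inr,
    Set.ncard_image_of_injective _ Sum.inl_injective,
    Set.ncard_image_of_injective _ Sum.inr_injective]

namespace ZMod

variable {n k : ℕ}

theorem val_add_eq_or [NeZero n] (a b : ZMod n) :
    (a + b).val = a.val + b.val ∨ (a + b).val + n = a.val + b.val :=
  (lt_or_ge _ _).imp val_add_of_lt fun h => (val_add_val_of_le h).symm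

theorem val_add_one_eq_or [Fact (1 < n)] (i : ZMod n) :
    (i + 1).val = i.val + 1 ∨ (i + 1).val + n = i.val + 1 := by
  simpa only [val_one] using val_add_eq_or i 1

theorem val_add_natCast_eq_or [NeZero n] (i : ZMod n) (hk : k < n) :
    (i + k).val = i.val + k ∨ (i + k).val + n = i.val + k := by
  simpa only [val_natCast_of_lt hk] using val_add_eq_or i (k : ZMod n)

theorem val_sub_one_eq_or [Fact (1 < n)] (i : ZMod n) :
    i.val = (i - 1).val + 1 ∨ i.val + n = (i - 1).val + 1 := by
  have h := val_add_one_eq_or (i - 1)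
  rwa [sub_add_cancel] at h

theorem val_sub_natCast_eq_or [NeZero n] (i : ZMod n) (hk : k < n) :
    i.val = (i - (k : ZMod n)).val + k ∨ i.val + n = (i - (k : ZMod n)).val + k := by
  have h := val_add_natCast_eq_or (i - (k : ZMod n)) hk
  rwa [sub_add_cancel] at h

theorem natCast_ne_zero_of_lt (hk : 0 < k) (hkn : k < n) : (k : ZMod n) ≠ 0 := by
  rw [Ne, natCast_eq_zero_iff]
  exact Nat.not_dvd_of_pos_of_lt hk hkn

theorem ncard_natCast_image {s : Set ℕ} (hs : ∀ a ∈ s, a < n) :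
    (Nat.cast '' s : Set (ZMod n)).ncard = s.ncard :=
  Set.InjOn.ncard_image fun a ha b hb hab => by
    rw [← val_natCast_of_lt (hs a ha), ← val_natCast_of_lt (hs b hb), hab]

end ZMod

section GenPetersen

variable {n k : ℕ} {f : ZMod n ⊕ ZMod n → ℕ}

theorem genPetersen_adj_succ [Fact (1 < n)] (i : ZMod n) :
    (genPetersen n k).Adj (.inl i) (.inl (i + 1)) :=
  (SimpleGraph.fromRel_adj _ _ _).2 ⟨by simp, .inl rfl⟩

theorem genPetersen_adj_pred [Fact (1 < n)] (i : ZMod n) :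
    (genPetersen n k).Adj (.inl i) (.inl (i - 1)) := by
  have h := (genPetersen_adj_succ (k := k) (i - 1)).symm
  rwa [sub_add_cancel] at h

theorem genPetersen_adj_spoke (i : ZMod n) : (genPetersen n k).Adj (.inl i) (.inr i) :=
  (SimpleGraph.fromRel_adj _ _ _).2 ⟨Sum.inl_ne_inr, .inl rfl⟩

theorem genPetersen_adj_add (hk : (k : ZMod n) ≠ 0) (i : ZMod n) :
    (genPetersen n k).Adj (.inr i) (.inr (i + k)) :=
  (SimpleGraph.fromRel_adj _ _ _).2 ⟨by simpa [eq_comm] using hk, .inl rfl⟩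

theorem genPetersen_adj_sub (hk : (k : ZMod n) ≠ 0) (i : ZMod n) :
    (genPetersen n k).Adj (.inr i) (.inr (i - k)) := by
  have h := (genPetersen_adj_add hk (i - k)).symm
  rwa [sub_add_cancel] at h

theorem genPetersen_exists_adj_inl_lt [Fact (1 < n)] {i : ZMod n}
    (h : f (.inl (i + 1)) < f (.inl i) ∨ f (.inl (i - 1)) < f (.inl i) ∨ f (.inr i) < f (.inl i)) :
    ∃ z, (genPetersen n k).Adj (.inl i) z ∧ f z < f (.inl i) := by
  rcases h with h | h | h
  exacts [⟨_, genPetersen_adj_succ i, h⟩, ⟨_, genPetersen_adj_pred i, h⟩,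
    ⟨_, genPetersen_adj_spoke i, h⟩]

theorem genPetersen_exists_adj_inr_lt (hk : (k : ZMod n) ≠ 0) {i : ZMod n}
    (h : f (.inr (i + k)) < f (.inr i) ∨ f (.inr (i - k)) < f (.inr i) ∨ f (.inl i) < f (.inr i)) :
    ∃ z, (genPetersen n k).Adj (.inr i) z ∧ f z < f (.inr i) := by
  rcases h with h | h | h
  exacts [⟨_, genPetersen_adj_add hk i, h⟩, ⟨_, genPetersen_adj_sub hk i, h⟩,
    ⟨_, (genPetersen_adj_spoke i).symm, h⟩]

end GenPetersen

namespace GenPetersenTwo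

/-! A shortest path in `GP(n,2)` from `u_j` or `v_j` to `u_0` or `v_0` winds `j` or `n - j` steps
one way round; let `m` be the shorter. Then `u_m` reaches `u_0` along the rim in `m` steps or via
the inner cycle in `⌈m/2⌉ + 2`; `v_m` reaches `u_0`, and `u_m` reaches `v_0`, in `⌈m/2⌉ + 1`; and
`v_j` reaches `v_0` in `j/2` steps if `j` is even and in `(j-1)/2 + 3` (the last three being spoke,
rim edge, spoke) if `j` is odd. -/

def outerDist (n j : ℕ) : ℕ := min (min j (n - j)) ((min j (n - j) + 1) / 2 + 2)

def spokeDist (n j : ℕ) : ℕ := (min j (n - j) + 1) / 2 + 1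

def innerDist (n j : ℕ) : ℕ := min (j / 2 + 3 * (j % 2)) ((n - j) / 2 + 3 * ((n - j) % 2))

section Arithmetic

variable {n a b c : ℕ}

theorem outerDist_lipschitz_of_add_one (ha : a < n) (hab : b = a + 1 ∨ b + n = a + 1) :
    outerDist n a ≤ outerDist n b + 1 ∧ outerDist n b ≤ outerDist n a + 1 := by
  simp only [outerDist]
  rcases hab with rfl | hab <;> omega

theorem spokeDist_lipschitz_of_add_one (ha : a < n) (hab : b = a + 1 ∨ b + n = a + 1) :
    spokeDist n a ≤ spokeDist n b + 1 ∧ spokeDist n b ≤ spokeDist n a + 1 := by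
  simp only [spokeDist]
  rcases hab with rfl | hab <;> omega

theorem spokeDist_lipschitz_of_add_two (ha : a < n) (hab : b = a + 2 ∨ b + n = a + 2) :
    spokeDist n a ≤ spokeDist n b + 1 ∧ spokeDist n b ≤ spokeDist n a + 1 := by
  simp only [spokeDist]
  rcases hab with rfl | hab <;> omega

theorem innerDist_lipschitz_of_add_two (ha : a < n) (hb : b < n) (hab : b = a + 2 ∨ b + n = a + 2) :
    innerDist n a ≤ innerDist n b + 1 ∧ innerDist n b ≤ innerDist n a + 1 := by
  simp only [innerDist]
  obtain ⟨m, rfl | rfl⟩ := Nat.even_or_odd' n <;> obtain ⟨a, rfl | rfl⟩ := Nat.even_or_odd' a <;>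
    rcases hab with rfl | hab <;> omega

theorem outerDist_spokeDist_lipschitz :
    outerDist n a ≤ spokeDist n a + 1 ∧ spokeDist n a ≤ outerDist n a + 1 := by
  simp only [outerDist, spokeDist]
  omega

theorem spokeDist_innerDist_lipschitz :
    spokeDist n a ≤ innerDist n a + 1 ∧ innerDist n a ≤ spokeDist n a + 1 := by
  simp only [spokeDist, innerDist]
  obtain ⟨m, rfl | rfl⟩ := Nat.even_or_odd' n <;> obtain ⟨a, rfl | rfl⟩ := Nat.even_or_odd' a <;>
    omega

theorem outerDist_descent (ha : a < n) (ha0 : a ≠ 0)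
    (hab : b = a + 1 ∨ b + n = a + 1) (hca : a = c + 1 ∨ a + n = c + 1) :
    outerDist n b < outerDist n a ∨ outerDist n c < outerDist n a ∨
      spokeDist n a < outerDist n a := by
  simp only [outerDist, spokeDist]
  rcases hab with rfl | hab <;> rcases hca with rfl | hca <;> omega

theorem spokeDist_descent_of_add_two
    (hab : b = a + 2 ∨ b + n = a + 2) (hca : a = c + 2 ∨ a + n = c + 2) :
    spokeDist n b < spokeDist n a ∨ spokeDist n c < spokeDist n a ∨
      outerDist n a < spokeDist n a := by
  simp only [outerDist, spokeDist]
  rcases hab with rfl | hab <;> rcases hca with rfl | hca <;> omega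

theorem spokeDist_descent_of_add_one (ha : a < n) (hc : c < n)
    (hab : b = a + 1 ∨ b + n = a + 1) (hca : a = c + 1 ∨ a + n = c + 1) :
    spokeDist n b < spokeDist n a ∨ spokeDist n c < spokeDist n a ∨
      innerDist n a < spokeDist n a := by
  simp only [innerDist, spokeDist]
  rcases hab with rfl | hab <;> rcases hca with rfl | hca <;> omega

theorem innerDist_descent (ha : a < n) (ha0 : a ≠ 0)
    (hab : b = a + 2 ∨ b + n = a + 2) (hca : a = c + 2 ∨ a + n = c + 2) :
    innerDist n b < innerDist n a ∨ innerDist n c < innerDist n a ∨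
      spokeDist n a < innerDist n a := by
  simp only [innerDist, spokeDist]
  -- the shorter route round starts with an inner edge if its length is even, with the spoke if odd
  rcases le_or_gt (a / 2 + 3 * (a % 2)) ((n - a) / 2 + 3 * ((n - a) % 2)) with h | h
  · rcases Nat.mod_two_eq_zero_or_one a with h2 | h2
    · right; left; omega
    · right; right; omega
  · rcases Nat.mod_two_eq_zero_or_one (n - a) with h2 | h2
    · left; omega
    · right; right; omega

theorem spokeDist_le_outerDist (ha : 2 ≤ a) (ha' : a + 2 ≤ n) : spokeDist n a ≤ outerDist n a := by
  simp only [outerDist, spokeDist]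
  omega

theorem spokeDist_lt_outerDist (ha : 4 ≤ a) (ha' : a + 4 ≤ n) : spokeDist n a < outerDist n a := by
  simp only [outerDist, spokeDist]
  omega

theorem innerDist_lt_spokeDist_of_add_one (ha : a < n) (hb : b < n)
    (hab : b = a + 1 ∨ b + n = a + 1) (h : spokeDist n a < innerDist n a) :
    innerDist n b < spokeDist n b := by
  simp only [spokeDist, innerDist] at *
  obtain ⟨m, rfl | rfl⟩ := Nat.even_or_odd' n <;> obtain ⟨a, rfl | rfl⟩ := Nat.even_or_odd' a <;>
    rcases hab with rfl | hab <;> omega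

end Arithmetic

variable {n : ℕ}

def distU0 : ZMod n ⊕ ZMod n → ℕ
  | .inl i => outerDist n i.val
  | .inr i => spokeDist n i.val

def distV0 : ZMod n ⊕ ZMod n → ℕ
  | .inl i => spokeDist n i.val
  | .inr i => innerDist n i.val

section

variable (hn : 2 < n)
include hn

theorem distU0_le_of_adj {x y : ZMod n ⊕ ZMod n} (h : (genPetersen n 2).Adj x y) :
    distU0 x ≤ distU0 y + 1 := by
  have : Fact (1 < n) := ⟨by omega⟩
  refine SimpleGraph.le_add_one_of_fromRel_adj ?_ h
  rintro (i | i) (j | j) hr <;> simp only at hr <;> subst hr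
  · exact outerDist_lipschitz_of_add_one (ZMod.val_lt _) (ZMod.val_add_one_eq_or i)
  · exact outerDist_spokeDist_lipschitz
  · exact spokeDist_lipschitz_of_add_two (ZMod.val_lt _) (ZMod.val_add_natCast_eq_or i hn)

theorem distV0_le_of_adj {x y : ZMod n ⊕ ZMod n} (h : (genPetersen n 2).Adj x y) :
    distV0 x ≤ distV0 y + 1 := by
  have : Fact (1 < n) := ⟨by omega⟩
  refine SimpleGraph.le_add_one_of_fromRel_adj ?_ h
  rintro (i | i) (j | j) hr <;> simp only at hr <;> subst hr
  · exact spokeDist_lipschitz_of_add_one (ZMod.val_lt _) (ZMod.val_add_one_eq_or i)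
  · exact spokeDist_innerDist_lipschitz
  · exact innerDist_lipschitz_of_add_two (ZMod.val_lt _) (ZMod.val_lt _)
      (ZMod.val_add_natCast_eq_or i hn)

theorem exists_adj_distU0_lt {x : ZMod n ⊕ ZMod n} (hx : x ≠ .inl 0) :
    ∃ z, (genPetersen n 2).Adj x z ∧ distU0 z < distU0 x := by
  have : Fact (1 < n) := ⟨by omega⟩
  rcases x with i | i
  · have hi : i.val ≠ 0 := by simpa [ZMod.val_eq_zero] using hx
    exact genPetersen_exists_adj_inl_lt <|
      outerDist_descent (ZMod.val_lt _) hi (ZMod.val_add_one_eq_or i) (ZMod.val_sub_one_eq_or i)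
  · exact genPetersen_exists_adj_inr_lt (ZMod.natCast_ne_zero_of_lt two_pos hn) <|
      spokeDist_descent_of_add_two (ZMod.val_add_natCast_eq_or i hn)
        (ZMod.val_sub_natCast_eq_or i hn)

theorem exists_adj_distV0_lt {x : ZMod n ⊕ ZMod n} (hx : x ≠ .inr 0) :
    ∃ z, (genPetersen n 2).Adj x z ∧ distV0 z < distV0 x := by
  have : Fact (1 < n) := ⟨by omega⟩
  rcases x with i | i
  · exact genPetersen_exists_adj_inl_lt <| spokeDist_descent_of_add_one (ZMod.val_lt _)
      (ZMod.val_lt _) (ZMod.val_add_one_eq_or i) (ZMod.val_sub_one_eq_or i)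
  · have hi : i.val ≠ 0 := by simpa [ZMod.val_eq_zero] using hx
    exact genPetersen_exists_adj_inr_lt (ZMod.natCast_ne_zero_of_lt two_pos hn) <|
      innerDist_descent (ZMod.val_lt _) hi (ZMod.val_add_natCast_eq_or i hn)
        (ZMod.val_sub_natCast_eq_or i hn)

theorem dist_inl_zero (x : ZMod n ⊕ ZMod n) : (genPetersen n 2).dist x (.inl 0) = distU0 x :=
  SimpleGraph.dist_eq_of_lipschitz_of_descent (by simp [distU0, outerDist])
    (fun _ _ => distU0_le_of_adj hn) (fun _ => exists_adj_distU0_lt hn) x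

theorem dist_inr_zero (x : ZMod n ⊕ ZMod n) : (genPetersen n 2).dist x (.inr 0) = distV0 x :=
  SimpleGraph.dist_eq_of_lipschitz_of_descent (by simp [distV0, innerDist])
    (fun _ _ => distV0_le_of_adj hn) (fun _ => exists_adj_distV0_lt hn) x

theorem mem_closerSet_inl_inr_iff {w : ZMod n ⊕ ZMod n} :
    w ∈ closerSet (genPetersen n 2) (.inl 0) (.inr 0) ↔ distU0 w < distV0 w := by
  rw [closerSet, Set.mem_ofPred_eq, dist_inl_zero hn, dist_inr_zero hn]

theorem mem_closerSet_inr_inl_iff {w : ZMod n ⊕ ZMod n} :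
    w ∈ closerSet (genPetersen n 2) (.inr 0) (.inl 0) ↔ distV0 w < distU0 w := by
  rw [closerSet, Set.mem_ofPred_eq, dist_inl_zero hn, dist_inr_zero hn]

theorem ncard_preimage_inl_closerSet_inl_inr_le_three :
    (Sum.inl ⁻¹' closerSet (genPetersen n 2) (.inl 0) (.inr 0)).ncard ≤ 3 := by
  have : NeZero n := ⟨by omega⟩
  calc _ ≤ (Nat.cast '' {0, 1, n - 1} : Set (ZMod n)).ncard := by
        refine Set.ncard_le_ncard (fun i hi => ⟨i.val, ?_, ZMod.natCast_zmod_val i⟩)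
        rw [Set.mem_preimage, mem_closerSet_inl_inr_iff hn] at hi
        have hi_lt := ZMod.val_lt i
        have hi_rim : ¬(2 ≤ i.val ∧ i.val + 2 ≤ n) :=
          fun h => (spokeDist_le_outerDist h.1 h.2).not_gt hi
        simp only [Set.mem_insert_iff, Set.mem_singleton_iff]
        omega
    _ ≤ ({0, 1, n - 1} : Set ℕ).ncard := Set.ncard_image_le
    _ ≤ 3 := by grw [Set.ncard_insert_le, Set.ncard_insert_le, Set.ncard_singleton]

theorem ncard_preimage_inr_closerSet_inl_inr_le :
    (Sum.inr ⁻¹' closerSet (genPetersen n 2) (.inl 0) (.inr 0)).ncard ≤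
      (Sum.inr ⁻¹' closerSet (genPetersen n 2) (.inr 0) (.inl 0)).ncard := by
  have : Fact (1 < n) := ⟨by omega⟩
  refine Set.ncard_le_ncard_of_injOn (· + 1) (fun i hi => ?_) (add_left_injective 1).injOn
  rw [Set.mem_preimage, mem_closerSet_inl_inr_iff hn] at hi
  rw [Set.mem_preimage, mem_closerSet_inr_inl_iff hn]
  exact innerDist_lt_spokeDist_of_add_one (ZMod.val_lt _) (ZMod.val_lt _)
    (ZMod.val_add_one_eq_or i) hi

end

theorem four_le_ncard_preimage_inl_closerSet_inr_inl (hn : 10 < n) :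
    4 ≤ (Sum.inl ⁻¹' closerSet (genPetersen n 2) (.inr 0) (.inl 0)).ncard := by
  have : NeZero n := ⟨by omega⟩
  calc 4 = (Set.Icc 4 7 : Set ℕ).ncard := by simp
    _ = (Nat.cast '' Set.Icc 4 7 : Set (ZMod n)).ncard :=
        (ZMod.ncard_natCast_image fun a ha => by grind).symm
    _ ≤ _ := by
        refine Set.ncard_le_ncard ?_
        rintro _ ⟨a, ⟨ha4, ha7⟩, rfl⟩
        rw [Set.mem_preimage, mem_closerSet_inr_inl_iff (by omega)]
        simp only [distU0, distV0, ZMod.val_natCast_of_lt (show a < n by omega)]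
        exact spokeDist_lt_outerDist ha4 (by omega)

end GenPetersenTwo

theorem stmt_4 (n : ℕ) (hn : 10 < n) :
    ¬ IsDistBalanced (genPetersen n 2) := by
  have : NeZero n := ⟨by omega⟩
  intro hbal
  have hW := hbal _ _ (genPetersen_adj_spoke (0 : ZMod n))
  rw [Set.ncard_eq_ncard_preimage_inl_add_ncard_preimage_inr,
    Set.ncard_eq_ncard_preimage_inl_add_ncard_preimage_inr] at hW
  have h2 : 2 < n := by omega
  have hrim_u := GenPetersenTwo.ncard_preimage_inl_closerSet_inl_inr_le_three h2
  have hrim_v := GenPetersenTwo.four_le_ncard_preimage_inl_closerSet_inr_inl hn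
  have hinner := GenPetersenTwo.ncard_preimage_inr_closerSet_inl_inr_le h2
  omega
end

section
/- Let k ≥ 4 be even and n ≥ k(k+2). In GP(n,k), considering the adjacent vertices u_0 and v_0: for 0 ≤ i ≤ k/2 the vertices u_i and u_{-i} lie in W_{u_0 v_0}; the vertices u_{(k+2)/2} and u_{-(k+2)/2} lie in _{u_0}W_{v_0}; and for (k+2)/2 < i ≤ n/2 the vertices u_i and u_{-i} lie in W_{v_0 u_0}. -/
open SimpleGraph Sum

variable {n k : ℕ}

lemma adj_rim (h1 : (1 : ZMod n) ≠ 0) (i : ZMod n) :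
    (genPetersen n k).Adj (inl i) (inl (i+1)) := by
  rw [genPetersen, SimpleGraph.fromRel_adj]
  refine ⟨?_, Or.inl rfl⟩
  simp only [ne_eq, inl.injEq, left_eq_add]
  exact h1

lemma adj_inner (hk0 : (k : ZMod n) ≠ 0) (i : ZMod n) :
    (genPetersen n k).Adj (inr i) (inr (i+k)) := by
  rw [genPetersen, SimpleGraph.fromRel_adj]
  refine ⟨?_, Or.inl rfl⟩
  simp only [ne_eq, inr.injEq, left_eq_add]
  exact hk0

lemma adj_spoke (i : ZMod n) :
    (genPetersen n k).Adj (inl i) (inr i) := by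
  rw [genPetersen, SimpleGraph.fromRel_adj]
  exact ⟨by simp, Or.inl rfl⟩

lemma reach_rim_nat (h1 : (1 : ZMod n) ≠ 0) (i : ZMod n) (t : ℕ) :
    ∃ p : (genPetersen n k).Walk (inl i) (inl (i + t)), p.length = t := by
  induction t with
  | zero => exact ⟨SimpleGraph.Walk.nil.copy rfl (by simp), by simp⟩
  | succ t ih =>
    obtain ⟨p, hp⟩ := ih
    refine ⟨(p.concat (adj_rim h1 _)).copy rfl (by push_cast; ring_nf), ?_⟩
    simp [SimpleGraph.Walk.length_concat, hp]

lemma cast_natAbs_nn {a : ℤ} (h : 0 ≤ a) : ((a.natAbs : ℕ) : ZMod n) = (a : ZMod n) := by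
  have h2 : ((a.natAbs : ℤ)) = a := Int.natAbs_of_nonneg h
  rw [show ((a.natAbs : ℕ) : ZMod n) = (((a.natAbs : ℤ)) : ZMod n) from (Int.cast_natCast _).symm,
    h2]

lemma cast_natAbs_np {a : ℤ} (h : a ≤ 0) : ((a.natAbs : ℕ) : ZMod n) = -(a : ZMod n) := by
  have h2 : ((a.natAbs : ℤ)) = -a := Int.ofNat_natAbs_of_nonpos h
  rw [show ((a.natAbs : ℕ) : ZMod n) = (((a.natAbs : ℤ)) : ZMod n) from (Int.cast_natCast _).symm,
    h2, Int.cast_neg]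

lemma reach_rim (h1 : (1 : ZMod n) ≠ 0) (i : ZMod n) (a : ℤ) :
    ∃ p : (genPetersen n k).Walk (inl i) (inl (i + a)), p.length = a.natAbs := by
  rcases le_or_gt 0 a with h | h
  · obtain ⟨p, hp⟩ := reach_rim_nat (k := k) h1 i a.natAbs
    exact ⟨p.copy rfl (by rw [cast_natAbs_nn h]), by simp [hp]⟩
  · obtain ⟨p, hp⟩ := reach_rim_nat (k := k) h1 (i + a) a.natAbs
    have hv : inl (α := ZMod n) (i + a + (a.natAbs : ℕ)) = inl (β := ZMod n) i := by
      rw [cast_natAbs_np h.le]; congr 1; ring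
    exact ⟨(p.copy rfl hv).reverse, by simp [hp]⟩

lemma reach_inner_nat (hk0 : (k : ZMod n) ≠ 0) (i : ZMod n) (t : ℕ) :
    ∃ p : (genPetersen n k).Walk (inr i) (inr (i + k * t)), p.length = t := by
  induction t with
  | zero => exact ⟨SimpleGraph.Walk.nil.copy rfl (by simp), by simp⟩
  | succ t ih =>
    obtain ⟨p, hp⟩ := ih
    refine ⟨(p.concat (adj_inner hk0 _)).copy rfl (by push_cast; ring_nf), ?_⟩
    simp [SimpleGraph.Walk.length_concat, hp]

lemma reach_inner (hk0 : (k : ZMod n) ≠ 0) (i : ZMod n) (b : ℤ) :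
    ∃ p : (genPetersen n k).Walk (inr i) (inr (i + k * b)), p.length = b.natAbs := by
  rcases le_or_gt 0 b with h | h
  · obtain ⟨p, hp⟩ := reach_inner_nat (k := k) hk0 i b.natAbs
    exact ⟨p.copy rfl (by rw [cast_natAbs_nn h]), by simp [hp]⟩
  · obtain ⟨p, hp⟩ := reach_inner_nat (k := k) hk0 (i + k * b) b.natAbs
    have hv : inr (α := ZMod n) (i + k * b + k * (b.natAbs : ℕ)) = inr (α := ZMod n) i := by
      rw [cast_natAbs_np h.le]; congr 1; ring
    exact ⟨(p.copy rfl hv).reverse, by simp [hp]⟩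

lemma dist_ub_rim (h1 : (1 : ZMod n) ≠ 0) (i j : ZMod n) (a : ℤ) (h : i + (a : ZMod n) = j) :
    (genPetersen n k).dist (inl i) (inl j) ≤ a.natAbs ∧
    (genPetersen n k).Reachable (inl i) (inl j) := by
  subst h
  obtain ⟨p, hp⟩ := reach_rim (k := k) h1 i a
  exact ⟨le_of_le_of_eq (SimpleGraph.dist_le p) hp, ⟨p⟩⟩

lemma dist_ub_spoke (h1 : (1 : ZMod n) ≠ 0) (hk0 : (k : ZMod n) ≠ 0)
    (i : ZMod n) (a b : ℤ)
    (h : i + (a : ZMod n) + (k : ZMod n) * (b : ZMod n) = 0) :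
    (genPetersen n k).dist (inl i) (inr 0) ≤ a.natAbs + b.natAbs + 1 ∧
    (genPetersen n k).Reachable (inl i) (inr 0) := by
  obtain ⟨p1, hp1⟩ := reach_rim (k := k) h1 i a
  obtain ⟨p2, hp2⟩ := reach_inner (k := k) hk0 (i + (a : ZMod n)) b
  have hv : inr (α := ZMod n) (i + (a : ZMod n) + (k : ZMod n) * (b : ZMod n))
      = inr (α := ZMod n) (0 : ZMod n) := by rw [h]
  have hl : (p2.copy rfl hv).length = b.natAbs := by simp [hp2]
  set q := p1.append (SimpleGraph.Walk.cons (adj_spoke (i + (a : ZMod n))) (p2.copy rfl hv)) with hq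
  refine ⟨le_of_le_of_eq (SimpleGraph.dist_le q) ?_, ⟨q⟩⟩
  rw [hq, SimpleGraph.Walk.length_append, SimpleGraph.Walk.length_cons, hp1, hl]
  omega

def idx : ZMod n ⊕ ZMod n → ZMod n := Sum.elim id id

lemma walk_count {x y : ZMod n ⊕ ZMod n} (p : (genPetersen n k).Walk x y) :
    ∃ a b : ℤ, ∃ s : ℕ,
      ((a + k * b : ℤ) : ZMod n) = idx y - idx x ∧
      a.natAbs + b.natAbs + s ≤ p.length ∧
      (Even s ↔ x.isRight = y.isRight) ∧
      (x.isLeft = true → b ≠ 0 → 1 ≤ s) := by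
  induction p with
  | nil => exact ⟨0, 0, 0, by push_cast; ring, by simp, by simp, by simp⟩
  | @cons x z y hadj q ih =>
    obtain ⟨a, b, s, h1, h2, h3, h4⟩ := ih
    rw [genPetersen, SimpleGraph.fromRel_adj] at hadj
    obtain ⟨hne, hor⟩ := hadj
    rcases x with i | i <;> rcases z with j | j
    · -- rim edge
      simp only [] at hor
      rcases hor with h | h
      · refine ⟨a + 1, b, s, ?_, by simp only [SimpleGraph.Walk.length_cons]; omega, h3, h4⟩
        subst h
        simp only [idx, Sum.elim_inl, id_eq] at h1 ⊢
        push_cast at h1 ⊢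
        linear_combination h1
      · refine ⟨a - 1, b, s, ?_, by simp only [SimpleGraph.Walk.length_cons]; omega, h3, h4⟩
        subst h
        simp only [idx, Sum.elim_inl, id_eq] at h1 ⊢
        push_cast at h1 ⊢
        linear_combination h1
    · -- spoke, outer to inner
      simp only [] at hor
      have h : i = j := by tauto
      subst h
      refine ⟨a, b, s + 1, ?_, by simp only [SimpleGraph.Walk.length_cons]; omega, ?_, by omega⟩
      · simp only [idx, Sum.elim_inl, Sum.elim_inr, id_eq] at h1 ⊢
        exact h1
      · rcases y with y | y <;>
          simp_all [Nat.even_add_one, parity_simps]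
    · -- spoke, inner to outer
      simp only [] at hor
      have h : j = i := by tauto
      subst h
      refine ⟨a, b, s + 1, ?_, by simp only [SimpleGraph.Walk.length_cons]; omega, ?_, by simp⟩
      · simp only [idx, Sum.elim_inl, Sum.elim_inr, id_eq] at h1 ⊢
        exact h1
      · rcases y with y | y <;>
          simp_all [Nat.even_add_one, parity_simps]
    · -- inner edge
      simp only [] at hor
      rcases hor with h | h
      · refine ⟨a, b + 1, s, ?_, by simp only [SimpleGraph.Walk.length_cons]; omega, h3, by simp⟩
        subst h
        simp only [idx, Sum.elim_inr, id_eq] at h1 ⊢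
        push_cast at h1 ⊢
        linear_combination h1
      · refine ⟨a, b - 1, s, ?_, by simp only [SimpleGraph.Walk.length_cons]; omega, h3, by simp⟩
        subst h
        simp only [idx, Sum.elim_inr, id_eq] at h1 ⊢
        push_cast at h1 ⊢
        linear_combination h1

lemma NT1 (m nn a b t c : ℤ) (hm : 2 ≤ m) (hn : 2*m*(2*m+2) ≤ nn)
    (hc0 : 0 ≤ c) (hcm : c ≤ m+1) (h : a + 2*m*b + c = t*nn) :
    min c m ≤ |a| + |b| := by
  have hA1 : a ≤ |a| := le_abs_self a
  have hA2 : -|a| ≤ a := neg_abs_le a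
  have hB1 : b ≤ |b| := le_abs_self b
  have hB2 : -|b| ≤ b := neg_abs_le b
  have hA0 : 0 ≤ |a| := abs_nonneg a
  have hB0 : 0 ≤ |b| := abs_nonneg b
  have hnn : 0 < nn := by nlinarith
  rcases eq_or_ne t 0 with ht | ht
  · subst ht
    rcases eq_or_ne b 0 with hb | hb
    · subst hb
      have hae : a = -c := by linarith
      subst hae
      calc min c m ≤ c := min_le_left _ _
        _ ≤ |-c| + |(0:ℤ)| := by rw [abs_neg, abs_of_nonneg hc0, abs_zero]; linarith
    · have hb1 : 1 ≤ |b| := by rcases abs_cases b with ⟨h1, h2⟩ | ⟨h1, h2⟩ <;> omega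
      have key : 2*m*|b| - c ≤ |a| := by
        rcases abs_cases b with ⟨h1, h2⟩ | ⟨h1, h2⟩ <;> rw [h1] <;> nlinarith
      rcases min_cases c m with ⟨h1, h2⟩ | ⟨h1, h2⟩ <;> rw [h1] <;> nlinarith
  · have ht1 : 1 ≤ |t| := by rcases abs_cases t with ⟨h1, h2⟩ | ⟨h1, h2⟩ <;> omega
    have hT : nn ≤ |t| * nn := by nlinarith [abs_nonneg t]
    have habs : |t*nn - c| ≤ |a| + 2*m*|b| := by
      have h1 : t*nn - c = a + 2*m*b := by linarith
      rw [h1]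
      calc |a + 2*m*b| ≤ |a| + |2*m*b| := abs_add_le _ _
        _ = |a| + 2*m*|b| := by rw [abs_mul, abs_of_nonneg (by linarith : (0:ℤ) ≤ 2*m)]
    have h2 : nn - c ≤ |a| + 2*m*|b| := by
      have e1 : |t * nn| = |t| * nn := by rw [abs_mul, abs_of_pos hnn]
      have e2 : |t * nn| - |c| ≤ |t*nn - c| := abs_sub_abs_le_abs_sub _ _
      have e3 : |c| = c := abs_of_nonneg hc0
      nlinarith
    have hm' : m ≤ |a| + |b| := by
      by_contra hlt
      push_neg at hlt
      have e1 : 2*m*(|a|+|b|) ≤ 2*m*(m-1) :=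
        mul_le_mul_of_nonneg_left (by linarith) (by linarith)
      nlinarith
    rcases min_cases c m with ⟨h1, h2'⟩ | ⟨h1, h2'⟩ <;> rw [h1] <;> linarith

lemma NT_cmin (nn a t c : ℤ) (hc0 : 0 ≤ c) (h2 : 2*c ≤ nn) (h : a + c = t*nn) :
    c ≤ |a| := by
  have hnn : 0 ≤ nn := by linarith
  rcases eq_or_ne t 0 with ht | ht
  · subst ht
    rcases abs_cases a with ⟨h1, h2⟩ | ⟨h1, h2⟩ <;> omega
  · have ht1 : 1 ≤ |t| := by rcases abs_cases t with ⟨h1, h2⟩ | ⟨h1, h2⟩ <;> omega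
    have hT : nn ≤ |t| * nn := by nlinarith [abs_nonneg t]
    have e1 : |t * nn| = |t| * nn := by rw [abs_mul, abs_of_nonneg hnn]
    rcases abs_cases (t*nn) with ⟨h1, h2'⟩ | ⟨h1, h2'⟩ <;>
      rcases abs_cases a with ⟨g1, g2⟩ | ⟨g1, g2⟩ <;> omega

lemma lift_cong (a c : ℤ) (h : ((a : ℤ) : ZMod n) = ((c : ℤ) : ZMod n)) :
    ∃ t : ℤ, a = c + t * n := by
  rw [ZMod.intCast_eq_intCast_iff] at h
  obtain ⟨t, ht⟩ := h.dvd
  exact ⟨-t, by linarith⟩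

lemma le_dist {V : Type*} {G : SimpleGraph V} {u v : V} (h : G.Reachable u v) (L : ℕ)
    (hL : ∀ p : G.Walk u v, L ≤ p.length) : L ≤ G.dist u v := by
  obtain ⟨p, hp⟩ := h.exists_walk_length_eq_dist
  rw [← hp]; exact hL p

lemma dist_lb_v0 {m : ℕ} (hm : 2 ≤ m) (hkm : k = 2*m) (hn : 2*m*(2*m+2) ≤ n)
    (c : ℕ) (hcm : c ≤ m+1) (w : ZMod n)
    (hw : w = (c : ZMod n) ∨ w = -(c : ZMod n)) :
    ∀ p : (genPetersen n k).Walk (inl w) (inr 0), min c m + 1 ≤ p.length := by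
  intro p
  obtain ⟨a, b, s, h1, h2, h3, h4⟩ := walk_count p
  have hs : 1 ≤ s := by
    rcases Nat.even_or_odd s with he | ho
    · exact absurd (h3.mp he) (by simp)
    · exact ho.pos
  have hNT : ((min c m : ℕ) : ℤ) ≤ |a| + |b| := by
    rw [Nat.cast_min]
    rcases hw with hw | hw
    · have hcast : ((a + k * b : ℤ) : ZMod n) = ((-(c:ℤ) : ℤ) : ZMod n) := by
        rw [h1, hw]
        simp only [idx, Sum.elim_inl, Sum.elim_inr, id_eq]
        push_cast
        ring
      obtain ⟨t, ht⟩ := lift_cong _ _ hcast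
      rw [hkm] at ht
      push_cast at ht
      exact NT1 m n a b t c (by exact_mod_cast hm) (by exact_mod_cast hn)
        (by positivity) (by exact_mod_cast hcm) (by linarith)
    · have hcast : ((a + k * b : ℤ) : ZMod n) = (((c:ℤ) : ℤ) : ZMod n) := by
        rw [h1, hw]
        simp only [idx, Sum.elim_inl, Sum.elim_inr, id_eq]
        push_cast
        ring
      obtain ⟨t, ht⟩ := lift_cong _ _ hcast
      rw [hkm] at ht
      push_cast at ht
      have := NT1 m n (-a) (-b) (-t) c (by exact_mod_cast hm) (by exact_mod_cast hn)
        (by positivity) (by exact_mod_cast hcm) (by linarith)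
      rwa [abs_neg, abs_neg] at this
  have ha : |a| = (a.natAbs : ℤ) := by rw [Int.abs_eq_natAbs]
  have hb : |b| = (b.natAbs : ℤ) := by rw [Int.abs_eq_natAbs]
  rw [ha, hb] at hNT
  have hNT' : min c m ≤ a.natAbs + b.natAbs := by exact_mod_cast hNT
  omega

lemma dist_lb_u0 {m : ℕ} (hm : 2 ≤ m) (hkm : k = 2*m) (hn : 2*m*(2*m+2) ≤ n)
    (c : ℕ) (hcm : c ≤ m+1) (hc2 : 2*c ≤ n) (w : ZMod n)
    (hw : w = (c : ZMod n) ∨ w = -(c : ZMod n)) :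
    ∀ p : (genPetersen n k).Walk (inl w) (inl 0), min c (m+1) ≤ p.length := by
  intro p
  obtain ⟨a, b, s, h1, h2, h3, h4⟩ := walk_count p
  rcases Nat.eq_zero_or_pos s with hs | hs
  · -- no spokes: b = 0
    have hb : b = 0 := by
      by_contra hb
      have := h4 (by simp) hb
      omega
    subst hb
    have hNT : ((c : ℕ) : ℤ) ≤ |a| := by
      rcases hw with hw | hw
      · have hcast : ((a : ℤ) : ZMod n) = ((-(c:ℤ) : ℤ) : ZMod n) := by
          rw [show ((a:ℤ) : ZMod n) = ((a + k*0 : ℤ) : ZMod n) by push_cast; ring, h1, hw]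
          simp only [idx, Sum.elim_inl, Sum.elim_inr, id_eq]
          push_cast
          ring
        obtain ⟨t, ht⟩ := lift_cong _ _ hcast
        exact NT_cmin n a t c (by positivity) (by exact_mod_cast hc2) (by linarith)
      · have hcast : ((a : ℤ) : ZMod n) = (((c:ℤ) : ℤ) : ZMod n) := by
          rw [show ((a:ℤ) : ZMod n) = ((a + k*0 : ℤ) : ZMod n) by push_cast; ring, h1, hw]
          simp only [idx, Sum.elim_inl, Sum.elim_inr, id_eq]
          push_cast
          ring
        obtain ⟨t, ht⟩ := lift_cong _ _ hcast
        have := NT_cmin n (-a) (-t) c (by positivity) (by exact_mod_cast hc2) (by linarith)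
        rwa [abs_neg] at this
    rw [Int.abs_eq_natAbs] at hNT
    have hNT' : c ≤ a.natAbs := by exact_mod_cast hNT
    omega
  · -- at least one spoke, hence two
    have hs2 : 2 ≤ s := by
      rcases Nat.even_or_odd s with he | ho
      · obtain ⟨r, hr⟩ := he
        omega
      · exfalso
        have := h3.mpr (by simp)
        exact (Nat.not_even_iff_odd.mpr ho) this
    have hNT : ((min c m : ℕ) : ℤ) ≤ |a| + |b| := by
      rw [Nat.cast_min]
      rcases hw with hw | hw
      · have hcast : ((a + k * b : ℤ) : ZMod n) = ((-(c:ℤ) : ℤ) : ZMod n) := by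
          rw [h1, hw]
          simp only [idx, Sum.elim_inl, Sum.elim_inr, id_eq]
          push_cast
          ring
        obtain ⟨t, ht⟩ := lift_cong _ _ hcast
        rw [hkm] at ht
        push_cast at ht
        exact NT1 m n a b t c (by exact_mod_cast hm) (by exact_mod_cast hn)
          (by positivity) (by exact_mod_cast hcm) (by linarith)
      · have hcast : ((a + k * b : ℤ) : ZMod n) = (((c:ℤ) : ℤ) : ZMod n) := by
          rw [h1, hw]
          simp only [idx, Sum.elim_inl, Sum.elim_inr, id_eq]
          push_cast
          ring
        obtain ⟨t, ht⟩ := lift_cong _ _ hcast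
        rw [hkm] at ht
        push_cast at ht
        have := NT1 m n (-a) (-b) (-t) c (by exact_mod_cast hm) (by exact_mod_cast hn)
          (by positivity) (by exact_mod_cast hcm) (by linarith)
        rwa [abs_neg, abs_neg] at this
    rw [Int.abs_eq_natAbs, Int.abs_eq_natAbs] at hNT
    have hNT' : min c m ≤ a.natAbs + b.natAbs := by exact_mod_cast hNT
    omega

lemma partA {m : ℕ} (hm : 2 ≤ m) (hkm : k = 2*m) (hn : 2*m*(2*m+2) ≤ n)
    (i : ℕ) (hi : i ≤ m) (w : ZMod n)
    (hw : w = (i : ZMod n) ∨ w = -(i : ZMod n)) :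
    (genPetersen n k).dist (inl w) (inl 0) < (genPetersen n k).dist (inl w) (inr 0) := by
  have hn24 : 24 ≤ n := by nlinarith
  haveI : NeZero n := ⟨by omega⟩
  haveI : Fact (1 < n) := ⟨by omega⟩
  have h1 : (1 : ZMod n) ≠ 0 := one_ne_zero
  have hkn : k < n := by nlinarith
  have hk0 : (k : ZMod n) ≠ 0 := by
    rw [Ne, ZMod.natCast_eq_zero_iff]
    intro h
    have := Nat.le_of_dvd (by omega) h
    omega
  -- choose the rim offset
  obtain ⟨a, ha, hna⟩ : ∃ a : ℤ, w + (a : ZMod n) = 0 ∧ a.natAbs = i := by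
    rcases hw with hw | hw
    · exact ⟨-(i:ℤ), by rw [hw]; push_cast; ring, by simp⟩
    · exact ⟨(i:ℤ), by rw [hw]; push_cast; ring, by simp⟩
  have hub := dist_ub_rim (k := k) h1 w 0 a ha
  have hubs := dist_ub_spoke h1 hk0 w a 0 (by rw [show ((0:ℤ):ZMod n) = 0 by simp]; rw [mul_zero, add_zero]; exact ha)
  have hlb := le_dist hubs.2 (min i m + 1) (dist_lb_v0 hm hkm hn i (by omega) w hw)
  have hmin : min i m = i := min_eq_left hi
  rw [hmin] at hlb
  calc (genPetersen n k).dist (inl w) (inl 0) ≤ i := by rw [← hna]; exact hub.1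
    _ < i + 1 := by omega
    _ ≤ _ := hlb

lemma partB {m : ℕ} (hm : 2 ≤ m) (hkm : k = 2*m) (hn : 2*m*(2*m+2) ≤ n)
    (w : ZMod n) (hw : w = ((m+1 : ℕ) : ZMod n) ∨ w = -((m+1 : ℕ) : ZMod n)) :
    (genPetersen n k).dist (inl w) (inl 0) = (genPetersen n k).dist (inl w) (inr 0) := by
  have hn24 : 24 ≤ n := by nlinarith
  haveI : NeZero n := ⟨by omega⟩
  haveI : Fact (1 < n) := ⟨by omega⟩
  have h1 : (1 : ZMod n) ≠ 0 := one_ne_zero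
  have hkn : k < n := by nlinarith
  have hk0 : (k : ZMod n) ≠ 0 := by
    rw [Ne, ZMod.natCast_eq_zero_iff]
    intro h
    have := Nat.le_of_dvd (by omega) h
    omega
  obtain ⟨a, ha, hna⟩ : ∃ a : ℤ, w + (a : ZMod n) = 0 ∧ a.natAbs = m+1 := by
    rcases hw with hw | hw
    · exact ⟨-((m+1:ℕ):ℤ), by rw [hw]; push_cast; ring, by push_cast; omega⟩
    · exact ⟨((m+1:ℕ):ℤ), by rw [hw]; push_cast; ring, by push_cast; omega⟩
  -- spoke route offsets
  obtain ⟨a', b', ha', hna'⟩ : ∃ a' b' : ℤ,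
      w + (a' : ZMod n) + (k : ZMod n) * (b' : ZMod n) = 0 ∧
      a'.natAbs + b'.natAbs = m := by
    rcases hw with hw | hw
    · refine ⟨(m:ℤ) - 1, -1, ?_, ?_⟩
      · rw [hw, hkm]; push_cast; ring
      · rw [show ((m:ℤ) - 1).natAbs = m - 1 by omega, show (-1 : ℤ).natAbs = 1 by simp]
        omega
    · refine ⟨-((m:ℤ) - 1), 1, ?_, ?_⟩
      · rw [hw, hkm]; push_cast; ring
      · rw [show (-((m:ℤ) - 1)).natAbs = m - 1 by omega, show (1 : ℤ).natAbs = 1 by simp]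
        omega
  have hub_u := dist_ub_rim (k := k) h1 w 0 a ha
  have hub_v := dist_ub_spoke h1 hk0 w a' b' ha'
  have hlb_u := le_dist hub_u.2 (min (m+1) (m+1))
    (dist_lb_u0 hm hkm hn (m+1) (by omega) (by nlinarith) w hw)
  have hlb_v := le_dist hub_v.2 (min (m+1) m + 1) (dist_lb_v0 hm hkm hn (m+1) (by omega) w hw)
  rw [min_self] at hlb_u
  rw [min_eq_right (by omega)] at hlb_v
  have e1 : (genPetersen n k).dist (inl w) (inl 0) = m + 1 := by
    have := hub_u.1
    rw [hna] at this
    omega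
  have e2 : (genPetersen n k).dist (inl w) (inr 0) = m + 1 := by
    have := hub_v.1
    rw [hna'] at this  -- careful: natAbs sum
    omega
  rw [e1, e2]

lemma partC {m : ℕ} (hm : 2 ≤ m) (hkm : k = 2*m) (hn : 2*m*(2*m+2) ≤ n)
    (i : ℕ) (hi1 : m+1 < i) (hi2 : 2*i ≤ n) (w : ZMod n)
    (hw : w = (i : ZMod n) ∨ w = -(i : ZMod n)) :
    (genPetersen n k).dist (inl w) (inr 0) < (genPetersen n k).dist (inl w) (inl 0) := by
  have hn24 : 24 ≤ n := by nlinarith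
  haveI : NeZero n := ⟨by omega⟩
  haveI : Fact (1 < n) := ⟨by omega⟩
  have h1 : (1 : ZMod n) ≠ 0 := one_ne_zero
  have hkn : k < n := by nlinarith
  have hk0 : (k : ZMod n) ≠ 0 := by
    rw [Ne, ZMod.natCast_eq_zero_iff]
    intro h
    have := Nat.le_of_dvd (by omega) h
    omega
  -- build the good spoke route for i
  obtain ⟨a₀, b₀, hz₀, hD₀⟩ : ∃ a₀ b₀ : ℤ,
      ((i : ZMod n) + (a₀ : ZMod n) + (k : ZMod n) * (b₀ : ZMod n) = 0) ∧
      a₀.natAbs + b₀.natAbs + 2 ≤ i := by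
    obtain ⟨q, r, hr, hiqr⟩ : ∃ q r : ℕ, r < k ∧ k * q + r = i :=
      ⟨i / k, i % k, Nat.mod_lt _ (by omega), Nat.div_add_mod i k⟩
    obtain ⟨K, hK⟩ : ∃ K, K = k * q := ⟨_, rfl⟩
    have hKq : 4 * q ≤ K := by rw [hK]; exact Nat.mul_le_mul_right q (by omega)
    rw [← hK] at hiqr
    have hiZ : (i : ℤ) = (K : ℤ) + r := by exact_mod_cast hiqr.symm
    have hKZ : (K : ℤ) = (k : ℤ) * q := by exact_mod_cast hK
    rcases le_or_gt (2 * r) k with h2r | h2r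
    · -- q ≥ 1 here
      have hq1 : 1 ≤ q := by
        rcases Nat.eq_zero_or_pos q with h | h
        · exfalso; rw [h] at hK; simp at hK; omega
        · exact h
      refine ⟨-(r : ℤ), -(q : ℤ), ?_, ?_⟩
      · have hz : (i : ℤ) + -(r:ℤ) + (k:ℤ) * (-(q:ℤ)) = 0 := by
          rw [hiZ, hKZ]; ring
        have := congrArg (fun z : ℤ => (z : ZMod n)) hz
        push_cast at this ⊢
        linear_combination this
      · rw [show (-(r:ℤ)).natAbs = r by omega, show (-(q:ℤ)).natAbs = q by omega]
        omega
    · refine ⟨(k : ℤ) - r, -((q : ℤ) + 1), ?_, ?_⟩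
      · have hz : (i : ℤ) + ((k:ℤ) - r) + (k:ℤ) * (-((q:ℤ) + 1)) = 0 := by
          rw [hiZ, hKZ]; ring
        have := congrArg (fun z : ℤ => (z : ZMod n)) hz
        push_cast at this ⊢
        linear_combination this
      · have e1 : ((k:ℤ) - r).natAbs = k - r := by omega
        have e2 : (-((q:ℤ) + 1)).natAbs = q + 1 := by omega
        rw [e1, e2]
        rcases Nat.eq_zero_or_pos q with h | h
        · have hK0 : K = 0 := by rw [hK, h, Nat.mul_zero]
          omega
        · omega
  -- transfer to w (possibly negated)
  obtain ⟨a₁, b₁, hz₁, hD₁⟩ : ∃ a₁ b₁ : ℤ,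
      (w + (a₁ : ZMod n) + (k : ZMod n) * (b₁ : ZMod n) = 0) ∧
      a₁.natAbs + b₁.natAbs + 2 ≤ i := by
    rcases hw with hw | hw
    · exact ⟨a₀, b₀, by rw [hw]; exact hz₀, hD₀⟩
    · refine ⟨-a₀, -b₀, ?_, by omega⟩
      rw [hw]
      push_cast
      linear_combination -hz₀
  have hub_v := dist_ub_spoke h1 hk0 w a₁ b₁ hz₁
  set dv := (genPetersen n k).dist (inl w) (inr 0) with hdv
  have hdvi : dv + 1 ≤ i := by
    have := hub_v.1
    omega
  -- reachability to u_0
  obtain ⟨a, ha⟩ : ∃ a : ℤ, w + (a : ZMod n) = 0 := by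
    rcases hw with hw | hw
    · exact ⟨-(i:ℤ), by rw [hw]; push_cast; ring⟩
    · exact ⟨(i:ℤ), by rw [hw]; push_cast; ring⟩
  have hreach_u := (dist_ub_rim (k := k) h1 w 0 a ha).2
  -- every walk to u_0 has length ≥ dv + 1
  have hlb := le_dist hreach_u (dv + 1) ?_
  · omega
  intro p
  obtain ⟨a', b', s, h1', h2', h3', h4'⟩ := walk_count p
  rcases Nat.eq_zero_or_pos s with hs | hs
  · -- spoke-free: pure rim walk, length ≥ i
    have hb : b' = 0 := by
      by_contra hb
      have := h4' (by simp) hb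
      omega
    subst hb
    have hNT : ((i : ℕ) : ℤ) ≤ |a'| := by
      rcases hw with hw | hw
      · have hcast : ((a' : ℤ) : ZMod n) = ((-(i:ℤ) : ℤ) : ZMod n) := by
          rw [show ((a':ℤ) : ZMod n) = ((a' + k*0 : ℤ) : ZMod n) by push_cast; ring, h1', hw]
          simp only [idx, Sum.elim_inl, Sum.elim_inr, id_eq]
          push_cast
          ring
        obtain ⟨t, ht⟩ := lift_cong _ _ hcast
        exact NT_cmin n a' t i (by positivity) (by exact_mod_cast hi2) (by linarith)
      · have hcast : ((a' : ℤ) : ZMod n) = (((i:ℤ) : ℤ) : ZMod n) := by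
          rw [show ((a':ℤ) : ZMod n) = ((a' + k*0 : ℤ) : ZMod n) by push_cast; ring, h1', hw]
          simp only [idx, Sum.elim_inl, Sum.elim_inr, id_eq]
          push_cast
          ring
        obtain ⟨t, ht⟩ := lift_cong _ _ hcast
        have := NT_cmin n (-a') (-t) i (by positivity) (by exact_mod_cast hi2) (by linarith)
        rwa [abs_neg] at this
    rw [Int.abs_eq_natAbs] at hNT
    have hNT' : i ≤ a'.natAbs := by exact_mod_cast hNT
    omega
  · -- uses spokes: at least 2, and gives a route to v_0
    have hs2 : 2 ≤ s := by
      rcases Nat.even_or_odd s with he | ho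
      · obtain ⟨t, ht⟩ := he
        omega
      · exfalso
        have := h3'.mpr (by simp)
        exact (Nat.not_even_iff_odd.mpr ho) this
    have hz' : w + (a' : ZMod n) + (k : ZMod n) * (b' : ZMod n) = 0 := by
      push_cast at h1'
      simp only [idx, Sum.elim_inl, Sum.elim_inr, id_eq] at h1'
      linear_combination h1'
    have := (dist_ub_spoke h1 hk0 w a' b' hz').1
    omega

theorem stmt_10 (n k : ℕ) (hk : 4 ≤ k) (hke : Even k) (hn : k * (k + 2) ≤ n) :
    (∀ i : ℕ, i ≤ k / 2 →
      Sum.inl ((i : ZMod n)) ∈ closerSet (genPetersen n k) (Sum.inl 0) (Sum.inr 0) ∧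
      Sum.inl (-(i : ZMod n)) ∈ closerSet (genPetersen n k) (Sum.inl 0) (Sum.inr 0)) ∧
    (Sum.inl ((((k + 2) / 2 : ℕ) : ZMod n)) ∈
        eqDistSet (genPetersen n k) (Sum.inl 0) (Sum.inr 0) ∧
      Sum.inl (-(((k + 2) / 2 : ℕ) : ZMod n)) ∈
        eqDistSet (genPetersen n k) (Sum.inl 0) (Sum.inr 0)) ∧
    (∀ i : ℕ, (k + 2) / 2 < i → i ≤ n / 2 →
      Sum.inl ((i : ZMod n)) ∈ closerSet (genPetersen n k) (Sum.inr 0) (Sum.inl 0) ∧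
      Sum.inl (-(i : ZMod n)) ∈ closerSet (genPetersen n k) (Sum.inr 0) (Sum.inl 0)) := by
  obtain ⟨m, hm'⟩ := hke
  have hkm : k = 2*m := by omega
  have hm : 2 ≤ m := by omega
  have hn' : 2*m*(2*m+2) ≤ n := by
    calc 2*m*(2*m+2) = k*(k+2) := by rw [hkm]
      _ ≤ n := hn
  have hc : (k+2)/2 = m+1 := by omega
  refine ⟨?_, ⟨?_, ?_⟩, ?_⟩
  · intro i hi
    have him : i ≤ m := by omega
    exact ⟨partA hm hkm hn' i him _ (Or.inl rfl), partA hm hkm hn' i him _ (Or.inr rfl)⟩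
  · rw [hc]
    exact partB hm hkm hn' _ (Or.inl rfl)
  · rw [hc]
    exact partB hm hkm hn' _ (Or.inr rfl)
  · intro i hi1 hi2
    have h1 : m+1 < i := by omega
    have h2 : 2*i ≤ n := by omega
    exact ⟨partC hm hkm hn' i h1 h2 _ (Or.inl rfl), partC hm hkm hn' i h1 h2 _ (Or.inr rfl)⟩
end

section
/- Let k ≥ 3 be odd and n ≥ k(k+2). In GP(n,k), considering the adjacent vertices u_0 and v_0: for 0 ≤ i ≤ (k+1)/2 the vertices u_i and u_{-i} lie in W_{u_0 v_0}, and for (k+1)/2 < i ≤ n/2 the vertices u_i and u_{-i} lie in W_{v_0 u_0}. -/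
namespace GPAux

open SimpleGraph

variable {n k : ℕ}


/-- circular distance from 0 -/
def cd (n : ℕ) (x : ZMod n) : ℕ := min x.val (n - x.val)

variable {n k : ℕ}

lemma cd_zero [NeZero n] : cd n (0 : ZMod n) = 0 := by
  simp [cd]

lemma cd_neg [NeZero n] (x : ZMod n) : cd n (-x) = cd n x := by
  by_cases h : x = 0
  · simp [h]
  · have hv : (-x).val = n - x.val := by rw [ZMod.neg_val]; simp [h]
    have hlt : x.val < n := ZMod.val_lt x
    have h0 : x.val ≠ 0 := fun h0 => h ((ZMod.val_eq_zero x).mp h0)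
    unfold cd
    rw [hv]
    omega

lemma cd_succ [NeZero n] (hn1 : n ≠ 1) (x : ZMod n) :
    cd n (x + 1) ≤ cd n x + 1 ∧ cd n x ≤ cd n (x + 1) + 1 := by
  have h1 : (x + 1).val = (x.val + (1 : ZMod n).val) % n := ZMod.val_add x 1
  rw [ZMod.val_one'' hn1] at h1
  have hlt : x.val < n := ZMod.val_lt x
  have h2 : (x + 1).val = x.val + 1 ∨ (x.val + 1 = n ∧ (x + 1).val = 0) := by
    rcases Nat.lt_or_ge (x.val + 1) n with h | h
    · left; rw [h1, Nat.mod_eq_of_lt h]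
    · right
      have he : x.val + 1 = n := by omega
      rw [h1, he, Nat.mod_self]
      exact ⟨rfl, rfl⟩
  unfold cd
  omega

lemma cd_pred [NeZero n] (hn1 : n ≠ 1) (x : ZMod n) :
    cd n (x - 1) ≤ cd n x + 1 ∧ cd n x ≤ cd n (x - 1) + 1 := by
  have := cd_succ hn1 (x - 1)
  rw [sub_add_cancel] at this
  exact ⟨this.2, this.1⟩

lemma cd_natCast_le [NeZero n] (hn1 : n ≠ 1) (a : ℕ) : cd n ((a : ZMod n)) ≤ a := by
  induction a with
  | zero => simp [cd_zero]
  | succ a ih =>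
    have h : ((a + 1 : ℕ) : ZMod n) = (a : ZMod n) + 1 := by push_cast; ring
    rw [h]
    exact le_trans (cd_succ hn1 _).1 (by omega)

lemma cd_intCast_le [NeZero n] (hn1 : n ≠ 1) (a : ℤ) :
    cd n ((a : ZMod n)) ≤ a.natAbs := by
  obtain ⟨b, rfl | rfl⟩ := Int.eq_nat_or_neg a
  · rw [Int.cast_natCast, Int.natAbs_natCast]; exact cd_natCast_le hn1 b
  · have h : (((-(b:ℤ)) : ℤ) : ZMod n) = -((b : ℕ) : ZMod n) := by push_cast; ring
    rw [h, cd_neg, Int.natAbs_neg, Int.natAbs_natCast]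
    exact cd_natCast_le hn1 b

lemma cd_natCast_eq [NeZero n] (a : ℕ) (ha : 2 * a ≤ n) : cd n ((a : ZMod n)) = a := by
  rcases Nat.eq_zero_or_pos a with rfl | hpos
  · simpa using cd_zero
  · have hlt : a < n := by omega
    have hv : ((a : ZMod n)).val = a := ZMod.val_cast_of_lt hlt
    unfold cd
    omega

lemma cd_natCast_ge [NeZero n] (a : ℕ) (ha : a ≤ n) :
    min a (n - a) ≤ cd n ((a : ZMod n)) := by
  rcases eq_or_lt_of_le ha with rfl | hlt
  · simp [ZMod.natCast_self]
  · have hv : ((a : ZMod n)).val = a := ZMod.val_cast_of_lt hlt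
    unfold cd
    omega

lemma cd_intCast_ge [NeZero n] (a : ℤ) (ha : a.natAbs ≤ n) :
    min a.natAbs (n - a.natAbs) ≤ cd n ((a : ZMod n)) := by
  obtain ⟨b, rfl | rfl⟩ := Int.eq_nat_or_neg a
  · rw [Int.cast_natCast, Int.natAbs_natCast]
    exact cd_natCast_ge b (by simpa using ha)
  · have h : (((-(b:ℤ)) : ℤ) : ZMod n) = -((b : ℕ) : ZMod n) := by push_cast; ring
    rw [h, cd_neg, Int.natAbs_neg, Int.natAbs_natCast]
    exact cd_natCast_ge b (by simpa using ha)

/-- min over t of |t| + cd (x - t*k) -/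
noncomputable def g (n k : ℕ) (x : ZMod n) : ℕ :=
  sInf {m | ∃ t : ℤ, m = t.natAbs + cd n (x - ((t * k : ℤ) : ZMod n))}

lemma g_le (x : ZMod n) (t : ℤ) :
    g n k x ≤ t.natAbs + cd n (x - ((t * k : ℤ) : ZMod n)) :=
  Nat.sInf_le ⟨t, rfl⟩

lemma g_spec (x : ZMod n) :
    ∃ t : ℤ, g n k x = t.natAbs + cd n (x - ((t * k : ℤ) : ZMod n)) :=
  Nat.sInf_mem (⟨0 + cd n (x - ((0 * k : ℤ) : ZMod n)), 0, rfl⟩ :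
    Set.Nonempty {m | ∃ t : ℤ, m = t.natAbs + cd n (x - ((t * k : ℤ) : ZMod n))})

lemma g_zero [NeZero n] : g n k (0 : ZMod n) = 0 := by
  have h := g_le (n := n) (k := k) (0 : ZMod n) 0
  simpa [cd_zero] using h

lemma g_le_cd (x : ZMod n) : g n k x ≤ cd n x := by
  simpa using g_le x 0

lemma g_neg [NeZero n] (x : ZMod n) : g n k (-x) = g n k x := by
  have key : ∀ y : ZMod n, g n k (-y) ≤ g n k y := by
    intro y
    obtain ⟨t, ht⟩ := g_spec (k := k) y
    have h : (-y - (((-t) * k : ℤ) : ZMod n)) = -(y - ((t * k : ℤ) : ZMod n)) := by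
      push_cast; ring
    calc g n k (-y) ≤ (-t).natAbs + cd n (-y - (((-t) * k : ℤ) : ZMod n)) := g_le _ _
      _ = t.natAbs + cd n (y - ((t * k : ℤ) : ZMod n)) := by rw [h, cd_neg, Int.natAbs_neg]
      _ = g n k y := ht.symm
  refine le_antisymm (key x) ?_
  have := key (-x)
  rwa [neg_neg] at this

lemma g_succ [NeZero n] (hn1 : n ≠ 1) (x : ZMod n) :
    g n k (x + 1) ≤ g n k x + 1 ∧ g n k x ≤ g n k (x + 1) + 1 := by
  constructor
  · obtain ⟨t, ht⟩ := g_spec (k := k) x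
    have h : (x + 1 - ((t * k : ℤ) : ZMod n)) = (x - ((t * k : ℤ) : ZMod n)) + 1 := by ring
    calc g n k (x + 1) ≤ t.natAbs + cd n (x + 1 - ((t * k : ℤ) : ZMod n)) := g_le _ _
      _ ≤ t.natAbs + (cd n (x - ((t * k : ℤ) : ZMod n)) + 1) := by
          rw [h]; exact Nat.add_le_add_left (cd_succ hn1 _).1 _
      _ = g n k x + 1 := by omega
  · obtain ⟨t, ht⟩ := g_spec (k := k) (x + 1)
    have h : (x - ((t * k : ℤ) : ZMod n)) = (x + 1 - ((t * k : ℤ) : ZMod n)) - 1 := by ring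
    calc g n k x ≤ t.natAbs + cd n (x - ((t * k : ℤ) : ZMod n)) := g_le _ _
      _ ≤ t.natAbs + (cd n (x + 1 - ((t * k : ℤ) : ZMod n)) + 1) := by
          rw [h]; exact Nat.add_le_add_left (cd_pred hn1 _).1 _
      _ = g n k (x + 1) + 1 := by omega

lemma g_addk [NeZero n] (x : ZMod n) :
    g n k (x + (k : ZMod n)) ≤ g n k x + 1 ∧ g n k x ≤ g n k (x + (k : ZMod n)) + 1 := by
  constructor
  · obtain ⟨t, ht⟩ := g_spec (k := k) x
    have h : (x + (k : ZMod n) - (((t + 1) * k : ℤ) : ZMod n)) = x - ((t * k : ℤ) : ZMod n) := by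
      push_cast; ring
    calc g n k (x + (k : ZMod n)) ≤ (t + 1).natAbs + cd n (x + (k : ZMod n) - (((t + 1) * k : ℤ) : ZMod n)) := g_le _ _
      _ ≤ (t.natAbs + 1) + cd n (x - ((t * k : ℤ) : ZMod n)) := by
          rw [h]; have := Int.natAbs_add_le t 1; simp at this; omega
      _ = g n k x + 1 := by omega
  · obtain ⟨t, ht⟩ := g_spec (k := k) (x + (k : ZMod n))
    have h : (x - (((t - 1) * k : ℤ) : ZMod n)) = x + (k : ZMod n) - ((t * k : ℤ) : ZMod n) := by
      push_cast; ring
    calc g n k x ≤ (t - 1).natAbs + cd n (x - (((t - 1) * k : ℤ) : ZMod n)) := g_le _ _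
      _ ≤ (t.natAbs + 1) + cd n (x + (k : ZMod n) - ((t * k : ℤ) : ZMod n)) := by
          rw [h]; have : (t - 1).natAbs ≤ t.natAbs + 1 := by omega
          omega
      _ = g n k (x + (k : ZMod n)) + 1 := by omega


lemma adj_uu (h1 : (1 : ZMod n) ≠ 0) (j : ZMod n) :
    (genPetersen n k).Adj (.inl j) (.inl (j + 1)) := by
  rw [genPetersen, SimpleGraph.fromRel_adj]
  refine ⟨?_, Or.inl rfl⟩
  simp only [ne_eq, Sum.inl.injEq]
  intro h
  exact h1 (left_eq_add.mp h)

lemma adj_vv (hk0 : (k : ZMod n) ≠ 0) (j : ZMod n) :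
    (genPetersen n k).Adj (.inr j) (.inr (j + (k : ZMod n))) := by
  rw [genPetersen, SimpleGraph.fromRel_adj]
  refine ⟨?_, Or.inl rfl⟩
  simp only [ne_eq, Sum.inr.injEq]
  intro h
  exact hk0 (left_eq_add.mp h)

lemma adj_uv (j : ZMod n) :
    (genPetersen n k).Adj (.inl j) (.inr j) := by
  rw [genPetersen, SimpleGraph.fromRel_adj]
  exact ⟨by simp, Or.inl rfl⟩

lemma adj_cases {a b : ZMod n ⊕ ZMod n} (h : (genPetersen n k).Adj a b) :
    ∃ j : ZMod n, (a = .inl j ∧ b = .inl (j + 1)) ∨ (b = .inl j ∧ a = .inl (j + 1)) ∨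
      (a = .inr j ∧ b = .inr (j + (k : ZMod n))) ∨ (b = .inr j ∧ a = .inr (j + (k : ZMod n))) ∨
      (a = .inl j ∧ b = .inr j) ∨ (b = .inl j ∧ a = .inr j) := by
  rw [genPetersen, SimpleGraph.fromRel_adj] at h
  obtain ⟨-, h | h⟩ := h <;> rcases a with i | i <;> rcases b with j | j <;> simp_all


lemma pot_walk {V : Type*} {G : SimpleGraph V} {f : V → ℕ}
    (hf : ∀ a b, G.Adj a b → f a ≤ f b + 1) :
    ∀ {x y : V} (p : G.Walk x y), f x ≤ f y + p.length := by
  intro x y p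
  induction p with
  | nil => simp
  | @cons a b c h q ih =>
    have h1 := hf a b h
    have h2 : q.length + 1 = (SimpleGraph.Walk.cons h q).length := by
      simp [SimpleGraph.Walk.length_cons]
    omega

lemma pot_dist {V : Type*} {G : SimpleGraph V} {f : V → ℕ}
    (hf : ∀ a b, G.Adj a b → f a ≤ f b + 1) {x y : V} (hr : G.Reachable x y) :
    f x ≤ f y + G.dist x y := by
  obtain ⟨p, hp⟩ := hr.exists_walk_length_eq_dist
  rw [← hp]
  exact pot_walk hf p

lemma walk_add (h1 : (1 : ZMod n) ≠ 0) (j : ZMod n) (m : ℕ) :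
    ∃ p : (genPetersen n k).Walk (.inl j) (.inl (j + (m : ZMod n))), p.length = m := by
  induction m with
  | zero => exact ⟨SimpleGraph.Walk.nil.copy rfl (by norm_num), by simp⟩
  | succ m ih =>
    obtain ⟨p, hp⟩ := ih
    refine ⟨(p.concat (adj_uu h1 (j + (m : ZMod n)))).copy rfl (by push_cast; ring), ?_⟩
    simp [SimpleGraph.Walk.length_concat, hp]

lemma walk_sub (h1 : (1 : ZMod n) ≠ 0) (j : ZMod n) (m : ℕ) :
    ∃ p : (genPetersen n k).Walk (.inl j) (.inl (j - (m : ZMod n))), p.length = m := by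
  induction m with
  | zero => exact ⟨SimpleGraph.Walk.nil.copy rfl (by norm_num), by simp⟩
  | succ m ih =>
    obtain ⟨p, hp⟩ := ih
    have ha : (genPetersen n k).Adj (.inl (j - (m : ZMod n))) (.inl (j - ((m + 1 : ℕ) : ZMod n))) := by
      have := (adj_uu (k := k) h1 (j - ((m + 1 : ℕ) : ZMod n))).symm
      have he : j - ((m + 1 : ℕ) : ZMod n) + 1 = j - (m : ZMod n) := by push_cast; ring
      rwa [he] at this
    exact ⟨p.concat ha, by simp [SimpleGraph.Walk.length_concat, hp]⟩

lemma walk_inner_add (hk0 : (k : ZMod n) ≠ 0) (j : ZMod n) (m : ℕ) :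
    ∃ p : (genPetersen n k).Walk (.inr j) (.inr (j + (m : ZMod n) * (k : ZMod n))), p.length = m := by
  induction m with
  | zero => exact ⟨SimpleGraph.Walk.nil.copy rfl (by norm_num), by simp⟩
  | succ m ih =>
    obtain ⟨p, hp⟩ := ih
    refine ⟨(p.concat (adj_vv hk0 (j + (m : ZMod n) * (k : ZMod n)))).copy rfl (by push_cast; ring), ?_⟩
    simp [SimpleGraph.Walk.length_concat, hp]

lemma walk_inner_sub (hk0 : (k : ZMod n) ≠ 0) (j : ZMod n) (m : ℕ) :
    ∃ p : (genPetersen n k).Walk (.inr j) (.inr (j - (m : ZMod n) * (k : ZMod n))), p.length = m := by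
  induction m with
  | zero => exact ⟨SimpleGraph.Walk.nil.copy rfl (by norm_num), by simp⟩
  | succ m ih =>
    obtain ⟨p, hp⟩ := ih
    have ha : (genPetersen n k).Adj (.inr (j - (m : ZMod n) * (k : ZMod n)))
        (.inr (j - ((m + 1 : ℕ) : ZMod n) * (k : ZMod n))) := by
      have := (adj_vv (n := n) hk0 (j - ((m + 1 : ℕ) : ZMod n) * (k : ZMod n))).symm
      have he : j - ((m + 1 : ℕ) : ZMod n) * (k : ZMod n) + (k : ZMod n)
          = j - (m : ZMod n) * (k : ZMod n) := by push_cast; ring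
      rwa [he] at this
    exact ⟨p.concat ha, by simp [SimpleGraph.Walk.length_concat, hp]⟩


lemma walk_outer [NeZero n] (h1 : (1 : ZMod n) ≠ 0) (a b : ZMod n) :
    ∃ p : (genPetersen n k).Walk (.inl a) (.inl b), p.length ≤ cd n (b - a) := by
  have hcast : (((b - a).val : ℕ) : ZMod n) = b - a := by
    rw [ZMod.natCast_val, ZMod.cast_id]
  rcases le_total ((b - a).val) (n - (b - a).val) with h | h
  · obtain ⟨p, hp⟩ := walk_add (k := k) h1 a (b - a).val
    have he : a + (((b - a).val : ℕ) : ZMod n) = b := by rw [hcast]; ring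
    refine ⟨p.copy rfl (by rw [he]), ?_⟩
    rw [SimpleGraph.Walk.length_copy, hp]
    unfold cd; omega
  · obtain ⟨p, hp⟩ := walk_sub (k := k) h1 a (n - (b - a).val)
    have hvle : (b - a).val ≤ n := (ZMod.val_lt _).le
    have he : a - (((n - (b - a).val : ℕ)) : ZMod n) = b := by
      rw [Nat.cast_sub hvle, hcast, ZMod.natCast_self]; ring
    refine ⟨p.copy rfl (by rw [he]), ?_⟩
    rw [SimpleGraph.Walk.length_copy, hp]
    unfold cd; omega

lemma walk_inner_zero (hk0 : (k : ZMod n) ≠ 0) (t : ℤ) :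
    ∃ p : (genPetersen n k).Walk (.inr (((t * k : ℤ) : ZMod n))) (.inr 0), p.length = t.natAbs := by
  obtain ⟨a, rfl | rfl⟩ := Int.eq_nat_or_neg t
  · obtain ⟨p, hp⟩ := walk_inner_sub hk0 ((((a : ℤ) * k : ℤ) : ZMod n)) a
    have he : (((a : ℤ) * k : ℤ) : ZMod n) - (a : ZMod n) * (k : ZMod n) = 0 := by
      push_cast; ring
    exact ⟨p.copy rfl (by rw [he]), by simp [hp]⟩
  · obtain ⟨p, hp⟩ := walk_inner_add hk0 ((((-(a : ℤ)) * k : ℤ) : ZMod n)) a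
    have he : (((-(a : ℤ)) * k : ℤ) : ZMod n) + (a : ZMod n) * (k : ZMod n) = 0 := by
      push_cast; ring
    exact ⟨p.copy rfl (by rw [he]), by simp [hp]⟩

lemma walk_uv [NeZero n] (h1 : (1 : ZMod n) ≠ 0) (hk0 : (k : ZMod n) ≠ 0) (x : ZMod n) :
    ∃ p : (genPetersen n k).Walk (.inl x) (.inr 0), p.length ≤ g n k x + 1 := by
  obtain ⟨t, ht⟩ := g_spec (k := k) x
  obtain ⟨p1, hp1⟩ := walk_outer (k := k) h1 x (((t * k : ℤ) : ZMod n))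
  obtain ⟨p3, hp3⟩ := walk_inner_zero hk0 t
  refine ⟨p1.append (SimpleGraph.Walk.cons (adj_uv _) p3), ?_⟩
  rw [SimpleGraph.Walk.length_append, SimpleGraph.Walk.length_cons, hp3]
  have hcd : cd n ((((t * k : ℤ) : ZMod n)) - x) = cd n (x - (((t * k : ℤ) : ZMod n))) := by
    rw [← neg_sub x, cd_neg]
  omega

/-- potential for lower-bounding distance to `v_0` -/
noncomputable def f1 (n k : ℕ) : ZMod n ⊕ ZMod n → ℕ :=
  Sum.elim (fun j => g n k j + 1) (fun j => g n k j)

lemma hf1 [NeZero n] (hn1 : n ≠ 1) :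
    ∀ a b, (genPetersen n k).Adj a b → f1 n k a ≤ f1 n k b + 1 := by
  intro a b h
  obtain ⟨j, hc⟩ := adj_cases h
  have hs := g_succ (n := n) (k := k) hn1 j
  have hk' := g_addk (n := n) (k := k) j
  rcases hc with ⟨rfl, rfl⟩ | ⟨rfl, rfl⟩ | ⟨rfl, rfl⟩ | ⟨rfl, rfl⟩ | ⟨rfl, rfl⟩ | ⟨rfl, rfl⟩ <;>
    simp only [f1, Sum.elim_inl, Sum.elim_inr] <;> omega

/-- potential for lower-bounding distance to `u_0` -/
noncomputable def f2 (n k : ℕ) : ZMod n ⊕ ZMod n → ℕ :=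
  Sum.elim (fun j => min (cd n j) (g n k j + 2)) (fun j => g n k j + 1)

lemma hf2 [NeZero n] (hn1 : n ≠ 1) :
    ∀ a b, (genPetersen n k).Adj a b → f2 n k a ≤ f2 n k b + 1 := by
  intro a b h
  obtain ⟨j, hc⟩ := adj_cases h
  have hs := g_succ (n := n) (k := k) hn1 j
  have hk' := g_addk (n := n) (k := k) j
  have hc1 := cd_succ (n := n) hn1 j
  have hcd1 := g_le_cd (n := n) (k := k) j
  have hcd2 := g_le_cd (n := n) (k := k) (j + 1)
  rcases hc with ⟨rfl, rfl⟩ | ⟨rfl, rfl⟩ | ⟨rfl, rfl⟩ | ⟨rfl, rfl⟩ | ⟨rfl, rfl⟩ | ⟨rfl, rfl⟩ <;>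
    simp only [f2, Sum.elim_inl, Sum.elim_inr] <;> omega

lemma dist_uv_eq [NeZero n] (hn1 : n ≠ 1) (h1 : (1 : ZMod n) ≠ 0) (hk0 : (k : ZMod n) ≠ 0)
    (x : ZMod n) :
    (genPetersen n k).dist (.inl x) (.inr 0) = g n k x + 1 := by
  obtain ⟨p, hp⟩ := walk_uv (k := k) h1 hk0 x
  refine le_antisymm (le_trans (SimpleGraph.dist_le p) hp) ?_
  have hr : (genPetersen n k).Reachable (.inl x) (.inr 0) := ⟨p⟩
  have := pot_dist (hf1 (k := k) hn1) hr
  simp only [f1, Sum.elim_inl, Sum.elim_inr, g_zero] at this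
  omega

lemma dist_uu_le [NeZero n] (h1 : (1 : ZMod n) ≠ 0) (x : ZMod n) :
    (genPetersen n k).dist (.inl x) (.inl 0) ≤ cd n x := by
  obtain ⟨p, hp⟩ := walk_outer (k := k) h1 x 0
  have : cd n (0 - x) = cd n x := by rw [zero_sub, cd_neg]
  exact le_trans (SimpleGraph.dist_le p) (by omega)

lemma dist_uu_ge [NeZero n] (hn1 : n ≠ 1) (h1 : (1 : ZMod n) ≠ 0) (x : ZMod n) :
    min (cd n x) (g n k x + 2) ≤ (genPetersen n k).dist (.inl x) (.inl 0) := by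
  obtain ⟨p, hp⟩ := walk_outer (k := k) h1 x 0
  have hr : (genPetersen n k).Reachable (.inl x) (.inl 0) := ⟨p⟩
  have := pot_dist (hf2 (k := k) hn1) hr
  simp only [f2, Sum.elim_inl, Sum.elim_inr, g_zero, cd_zero] at this
  omega


lemma g_lower [NeZero n] {m i : ℕ} (hk : k = 2 * m + 1)
    (hn : 4 * (m * m) + 8 * m + 3 ≤ n) (hi : i ≤ m + 1) :
    i ≤ g n k ((i : ZMod n)) := by
  obtain ⟨t, ht⟩ := g_spec (n := n) (k := k) ((i : ZMod n))
  rw [ht]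
  set T := t.natAbs with hT
  rcases le_or_gt i T with hle | hlt
  · omega
  · set a : ℤ := (i : ℤ) - t * k with ha
    have hcast : ((i : ZMod n) - ((t * k : ℤ) : ZMod n)) = ((a : ℤ) : ZMod n) := by
      rw [ha]; push_cast; ring
    rw [hcast]
    set A := a.natAbs with hA
    have e1 : (t * (k : ℤ)).natAbs = T * k := by
      rw [Int.natAbs_mul, Int.natAbs_natCast]
    have h2 : T * k ≤ A + i := by
      have h' : ((i : ℤ) - a).natAbs ≤ (i : ℤ).natAbs + a.natAbs := Int.natAbs_sub_le _ _
      have h'' : (i : ℤ) - a = t * k := by rw [ha]; ring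
      rw [h''] at h'
      simpa [e1, Nat.add_comm] using h'
    have h3 : i ≤ A + T * k := by
      have h' : (a + t * k).natAbs ≤ a.natAbs + (t * (k : ℤ)).natAbs := Int.natAbs_add_le _ _
      have h'' : a + t * k = (i : ℤ) := by rw [ha]; ring
      rw [h''] at h'
      simpa [e1] using h'
    have h4 : A ≤ i + T * k := by
      have h' : ((i : ℤ) - t * k).natAbs ≤ (i : ℤ).natAbs + (t * (k : ℤ)).natAbs :=
        Int.natAbs_sub_le _ _
      simpa [← ha, e1] using h'
    have h5 : T ≤ m := by omega
    have h6 : T * k ≤ m * k := Nat.mul_le_mul_right k h5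
    have h7 : m * k = 2 * (m * m) + m := by rw [hk]; ring
    have h8 : A ≤ n := by omega
    have h9 := cd_intCast_ge (n := n) a h8
    have h10 : (T = 0 ∧ T * k = 0) ∨ k + 1 ≤ T * k + T := by
      rcases Nat.eq_zero_or_pos T with h | h
      · exact Or.inl ⟨h, by rw [h, Nat.zero_mul]⟩
      · right
        have h' := Nat.le_mul_of_pos_right (k + 1) h
        have h'' : (k + 1) * T = T * k + T := by ring
        omega
    rw [← hA] at h9
    rcases le_total A (n - A) with hmn | hmn
    · rw [min_eq_left hmn] at h9
      omega
    · rw [min_eq_right hmn] at h9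
      omega

lemma g_upper [NeZero n] (hn1 : n ≠ 1) {m i : ℕ} (hm : 1 ≤ m) (hk : k = 2 * m + 1) (hi : m + 2 ≤ i) :
    g n k ((i : ZMod n)) ≤ i - 2 := by
  obtain ⟨q, r, hqr, hrk⟩ : ∃ q r, k * q + r = i ∧ r < k :=
    ⟨i / k, i % k, Nat.div_add_mod i k, Nat.mod_lt _ (by omega)⟩
  have hz : ((k * q + r : ℕ) : ZMod n) = ((i : ℕ) : ZMod n) := by rw [hqr]
  push_cast at hz
  have h3q : 3 * q ≤ k * q := Nat.mul_le_mul_right q (by omega)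
  have hq01 : (q = 0 ∧ k * q = 0) ∨ 1 ≤ q := by
    rcases Nat.eq_zero_or_pos q with h | h
    · exact Or.inl ⟨h, by rw [h, Nat.mul_zero]⟩
    · exact Or.inr h
  rcases le_or_gt r m with hrm | hrm
  · have hle := g_le (n := n) (k := k) ((i : ZMod n)) ((q : ℤ))
    have hcast : ((i : ZMod n) - (((q : ℤ) * k : ℤ) : ZMod n)) = (((r : ℕ) : ℤ) : ZMod n) := by
      push_cast
      linear_combination -hz
    rw [hcast] at hle
    have hcd := cd_intCast_le (n := n) hn1 ((r : ℕ) : ℤ)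
    simp only [Int.natAbs_natCast] at hcd hle
    omega
  · have hle := g_le (n := n) (k := k) ((i : ZMod n)) ((q : ℤ) + 1)
    have hcast : ((i : ZMod n) - ((((q : ℤ) + 1) * k : ℤ) : ZMod n))
        = ((((r : ℤ) - (k : ℤ) : ℤ)) : ZMod n) := by
      push_cast
      linear_combination -hz
    rw [hcast] at hle
    have hcd := cd_intCast_le (n := n) hn1 ((r : ℤ) - (k : ℤ))
    have hab : ((r : ℤ) - (k : ℤ)).natAbs = k - r := by omega
    have hab2 : ((q : ℤ) + 1).natAbs = q + 1 := by omega
    rw [hab] at hcd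
    rw [hab2] at hle
    omega

end GPAux

open GPAux

theorem stmt_11 (n k : ℕ) (hk : 3 ≤ k) (hko : Odd k) (hn : k * (k + 2) ≤ n) :
    (∀ i : ℕ, i ≤ (k + 1) / 2 →
      Sum.inl ((i : ZMod n)) ∈ closerSet (genPetersen n k) (Sum.inl 0) (Sum.inr 0) ∧
      Sum.inl (-(i : ZMod n)) ∈ closerSet (genPetersen n k) (Sum.inl 0) (Sum.inr 0)) ∧
    (∀ i : ℕ, (k + 1) / 2 < i → i ≤ n / 2 →
      Sum.inl ((i : ZMod n)) ∈ closerSet (genPetersen n k) (Sum.inr 0) (Sum.inl 0) ∧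
      Sum.inl (-(i : ZMod n)) ∈ closerSet (genPetersen n k) (Sum.inr 0) (Sum.inl 0)) := by
  obtain ⟨m, hm⟩ := hko
  have hm1 : 1 ≤ m := by omega
  have hn' : 4 * (m * m) + 8 * m + 3 ≤ n := by
    have he : k * (k + 2) = 4 * (m * m) + 8 * m + 3 := by rw [hm]; ring
    omega
  haveI : NeZero n := ⟨by omega⟩
  have hn1 : n ≠ 1 := by omega
  have h1 : (1 : ZMod n) ≠ 0 := by
    intro h
    have hv := ZMod.val_one'' hn1
    rw [h, ZMod.val_zero] at hv
    omega
  have hkn : k < n := by nlinarith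
  have hk0 : ((k : ℕ) : ZMod n) ≠ 0 := by
    intro h
    have hv := ZMod.val_cast_of_lt (n := n) hkn
    rw [h, ZMod.val_zero] at hv
    omega
  have hhalf : (k + 1) / 2 = m + 1 := by omega
  constructor
  · intro i hi
    rw [hhalf] at hi
    have key : ∀ x : ZMod n, cd n x ≤ i → i ≤ g n k x →
        Sum.inl x ∈ closerSet (genPetersen n k) (Sum.inl 0) (Sum.inr 0) := by
      intro x hx hgx
      show (genPetersen n k).dist (Sum.inl x) (Sum.inl 0)
          < (genPetersen n k).dist (Sum.inl x) (Sum.inr 0)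
      have hu := dist_uu_le (k := k) h1 x
      have hv := dist_uv_eq hn1 h1 hk0 x
      omega
    have hg : i ≤ g n k ((i : ZMod n)) := g_lower hm hn' hi
    refine ⟨key _ (cd_natCast_le hn1 i) hg, key _ ?_ ?_⟩
    · rw [cd_neg]; exact cd_natCast_le hn1 i
    · rw [g_neg]; exact hg
  · intro i hi1 hi2
    rw [hhalf] at hi1
    have h2i : 2 * i ≤ n := by omega
    have hgu : g n k ((i : ZMod n)) ≤ i - 2 := g_upper hn1 hm1 hm (by omega)
    have hcd : cd n ((i : ZMod n)) = i := cd_natCast_eq i h2i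
    have key : ∀ x : ZMod n, cd n x = i → g n k x ≤ i - 2 →
        Sum.inl x ∈ closerSet (genPetersen n k) (Sum.inr 0) (Sum.inl 0) := by
      intro x hx hgx
      show (genPetersen n k).dist (Sum.inl x) (Sum.inr 0)
          < (genPetersen n k).dist (Sum.inl x) (Sum.inl 0)
      have hv := dist_uv_eq hn1 h1 hk0 x
      have hu := dist_uu_ge (k := k) hn1 h1 x
      rw [hx] at hu
      have hmin : min i (g n k x + 2) = g n k x + 2 := by omega
      rw [hmin] at hu
      omega
    refine ⟨key _ hcd hgu, key _ ?_ ?_⟩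
    · rw [cd_neg]; exact hcd
    · rw [g_neg]; exact hgu
end

section
/- Let k ≥ 3, n ≥ k(k+2), and suppose k divides n. In GP(n,k), considering the adjacent vertices u_0 and v_0: the vertices v_{ik} for 0 ≤ i ≤ n/k − 1 lie in W_{v_0 u_0}, and every other outer vertex v_j (j not a multiple of k) lies in W_{u_0 v_0}. -/
open SimpleGraph

/-- distance to 0 on a cycle of length N -/
def GPD (N m : ℕ) : ℕ := min (m % N) (N - m % N)

lemma GPD_mod (N m : ℕ) : GPD N (m % N) = GPD N m := by
  unfold GPD; rw [Nat.mod_mod_of_dvd m dvd_rfl]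

lemma GPD_zero (N : ℕ) : GPD N 0 = 0 := by simp [GPD]

lemma GPD_self (N : ℕ) : GPD N N = 0 := by simp [GPD, Nat.mod_self]

lemma GPD_lt {N m : ℕ} (h : m < N) : GPD N m = min m (N - m) := by
  unfold GPD; rw [Nat.mod_eq_of_lt h]

lemma GPD_pred {N : ℕ} (h : 2 ≤ N) : GPD N (N - 1) = 1 := by
  rw [GPD_lt (by omega)]; omega

lemma GPD_succ_self {N : ℕ} (h : 2 ≤ N) : GPD N (N + 1) = GPD N 1 := by
  rw [← GPD_mod N (N+1)]
  congr 1
  rw [Nat.add_mod, Nat.mod_self, Nat.mod_eq_of_lt (show 1 < N by omega)]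
  simp [Nat.mod_eq_of_lt (show 1 < N by omega)]

lemma GPD_lip (N m : ℕ) (hN : 2 ≤ N) : GPD N (m+1) ≤ GPD N m + 1 ∧ GPD N m ≤ GPD N (m+1) + 1 := by
  have h1 : m % N < N := Nat.mod_lt _ (by omega)
  have h2 : (m+1) % N = (m % N + 1) % N := by
    rw [Nat.add_mod, Nat.mod_eq_of_lt (show 1 < N by omega)]
  have e1 : GPD N (m+1) = GPD N (m % N + 1) := by
    rw [← GPD_mod N (m+1), h2, GPD_mod]
  have e2 : GPD N m = min (m % N) (N - m % N) := rfl
  rw [e1, e2]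
  rcases eq_or_ne (m % N + 1) N with h | h
  · rw [h, GPD_self]
    omega
  · rw [GPD_lt (show m % N + 1 < N by omega)]
    omega

/-- potential for distance to `u_0` -/
def GPmu (n k : ℕ) (a : ZMod n) : ℕ :=
  if a.val % k = 0 then GPD (n/k) (a.val/k)
  else min (GPD (n/k) (a.val/k)) (GPD (n/k) (a.val/k + 1))

def GPphi (n k : ℕ) : ZMod n ⊕ ZMod n → ℕ
  | .inl a => GPmu n k a
  | .inr a => GPmu n k a + 1

/-- potential for distance to `v_0` -/
def GPF (n k : ℕ) (a : ZMod n) : ℕ :=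
  min (GPD (n/k) (a.val/k) + a.val % k) (GPD (n/k) (a.val/k + 1) + (k - a.val % k))

def GPpsi (n k : ℕ) : ZMod n ⊕ ZMod n → ℕ
  | .inl a => GPF n k a + 1
  | .inr a => if a.val % k = 0 then GPD (n/k) (a.val/k) else GPF n k a + 2

section Adj

variable {n k : ℕ}

lemma gp_adj_outer (hn1 : 1 < n) (a : ZMod n) :
    (genPetersen n k).Adj (.inl a) (.inl (a+1)) := by
  haveI : Fact (1 < n) := ⟨hn1⟩
  rw [genPetersen, SimpleGraph.fromRel_adj]
  refine ⟨fun h => ?_, Or.inl rfl⟩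
  exact one_ne_zero (left_eq_add.mp (Sum.inl.inj h))

lemma gp_adj_inner (hk0 : 0 < k) (hkn : k < n) (a : ZMod n) :
    (genPetersen n k).Adj (.inr a) (.inr (a + (k : ZMod n))) := by
  rw [genPetersen, SimpleGraph.fromRel_adj]
  refine ⟨fun h => ?_, Or.inl rfl⟩
  have h2 : (k : ZMod n) = 0 := (left_eq_add.mp (Sum.inr.inj h))
  rw [ZMod.natCast_eq_zero_iff] at h2
  exact absurd (Nat.le_of_dvd hk0 h2) (by omega)

lemma gp_adj_spoke (a : ZMod n) :
    (genPetersen n k).Adj (.inl a) (.inr a) := by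
  rw [genPetersen, SimpleGraph.fromRel_adj]
  exact ⟨by simp, Or.inl rfl⟩

lemma gp_walk_outer (hn1 : 1 < n) (a : ZMod n) (m : ℕ) :
    ∃ p : (genPetersen n k).Walk (.inl a) (.inl (a + (m : ZMod n))), p.length = m := by
  induction m generalizing a with
  | zero => exact ⟨Walk.nil.copy rfl (by simp), by simp⟩
  | succ m ih =>
    obtain ⟨p, hp⟩ := ih (a+1)
    exact ⟨(Walk.cons (gp_adj_outer hn1 a) p).copy rfl (by push_cast; ring_nf), by simp [hp]⟩

lemma gp_walk_inner (hk0 : 0 < k) (hkn : k < n) (a : ZMod n) (m : ℕ) :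
    ∃ p : (genPetersen n k).Walk (.inr a) (.inr (a + ((m * k : ℕ) : ZMod n))), p.length = m := by
  induction m generalizing a with
  | zero => exact ⟨Walk.nil.copy rfl (by simp), by simp⟩
  | succ m ih =>
    obtain ⟨p, hp⟩ := ih (a + (k : ZMod n))
    exact ⟨(Walk.cons (gp_adj_inner hk0 hkn a) p).copy rfl (by push_cast; ring_nf), by simp [hp]⟩

lemma gp_dist_outer_le (hn1 : 1 < n) (a b : ZMod n) (m : ℕ) (h : b = a + (m : ZMod n)) :
    (genPetersen n k).dist (.inl a) (.inl b) ≤ m := by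
  subst h
  obtain ⟨p, hp⟩ := gp_walk_outer (k := k) hn1 a m
  exact le_trans (SimpleGraph.dist_le p) (le_of_eq hp)

lemma gp_dist_inner_le (hk0 : 0 < k) (hkn : k < n) (a b : ZMod n) (m : ℕ)
    (h : b = a + ((m * k : ℕ) : ZMod n)) :
    (genPetersen n k).dist (.inr a) (.inr b) ≤ m := by
  subst h
  obtain ⟨p, hp⟩ := gp_walk_inner (n := n) hk0 hkn a m
  exact le_trans (SimpleGraph.dist_le p) (le_of_eq hp)

lemma gp_dist_spoke (a : ZMod n) : (genPetersen n k).dist (.inl a) (.inr a) ≤ 1 := by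
  simpa using SimpleGraph.dist_le (gp_adj_spoke (k := k) a).toWalk

lemma gp_reach0 (hn1 : 1 < n) (hk0 : 0 < k) (hkn : k < n) (x : ZMod n ⊕ ZMod n) :
    (genPetersen n k).Reachable (.inl (0:ZMod n)) x := by
  haveI : NeZero n := ⟨by omega⟩
  have base : ∀ a : ZMod n, (genPetersen n k).Reachable (.inl (0:ZMod n)) (.inl a) := by
    intro a
    obtain ⟨p, _⟩ := gp_walk_outer (k := k) hn1 0 a.val
    exact ⟨p.copy rfl (by rw [zero_add, ZMod.natCast_zmod_val])⟩
  rcases x with a | a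
  · exact base a
  · exact (base a).trans ⟨(gp_adj_spoke a).toWalk⟩

lemma gp_connected (hn1 : 1 < n) (hk0 : 0 < k) (hkn : k < n) :
    (genPetersen n k).Connected :=
  (SimpleGraph.connected_iff _).mpr
    ⟨fun x y => (gp_reach0 hn1 hk0 hkn x).symm.trans (gp_reach0 hn1 hk0 hkn y),
      ⟨Sum.inl 0⟩⟩

end Adj

lemma pot_walk {V : Type*} {G : SimpleGraph V} {f : V → ℕ}
    (hf : ∀ ⦃x y⦄, G.Adj x y → f x ≤ f y + 1) {u v : V} (p : G.Walk u v) :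
    f u ≤ f v + p.length := by
  induction p with
  | nil => simp
  | cons h q ih => have := hf h; rw [Walk.length_cons]; omega

lemma pot_dist {V : Type*} {G : SimpleGraph V} {f : V → ℕ}
    (hf : ∀ ⦃x y⦄, G.Adj x y → f x ≤ f y + 1) {u v : V} (hr : G.Reachable u v) :
    f u ≤ f v + G.dist u v := by
  obtain ⟨p, hp⟩ := hr.exists_walk_length_eq_dist
  exact hp ▸ pot_walk hf p

section Steps

variable {n k : ℕ} (hk : 3 ≤ k) (hn : k * (k + 2) ≤ n) (hdvd : k ∣ n)
include hk hn hdvd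

lemma gp_basic : 15 ≤ n ∧ k < n ∧ n = (n/k) * k ∧ k + 2 ≤ n/k := by
  have h1 : 3 * 5 ≤ k * (k+2) := Nat.mul_le_mul hk (by omega)
  have h2 : k * 5 ≤ k * (k + 2) := Nat.mul_le_mul_left k (by omega)
  have h3 : (n/k) * k = n := Nat.div_mul_cancel hdvd
  have h4 : k + 2 ≤ n / k := by
    have : k * (k+2) ≤ k * (n/k) := by
      rw [mul_comm k (n/k), h3]; exact hn
    exact Nat.le_of_mul_le_mul_left this (by omega)
  exact ⟨by omega, by omega, h3.symm, h4⟩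

lemma gp_step_one (a : ZMod n) :
    (a.val % k + 1 < k ∧ (a+1).val / k = a.val / k ∧ (a+1).val % k = a.val % k + 1)
  ∨ (a.val % k = k - 1 ∧ a.val + 1 < n ∧ (a+1).val / k = a.val / k + 1 ∧ (a+1).val % k = 0)
  ∨ (a.val % k = k - 1 ∧ a.val / k = n/k - 1 ∧ (a+1).val = 0) := by
  obtain ⟨h15, hkn, hNk, hN2⟩ := gp_basic hk hn hdvd
  haveI : NeZero n := ⟨by omega⟩
  haveI : Fact (1 < n) := ⟨by omega⟩
  have hav : a.val < n := ZMod.val_lt a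
  have hmod := Nat.div_add_mod a.val k
  have hs : a.val % k < k := Nat.mod_lt _ (by omega)
  have hb : (a+1).val = (a.val + 1) % n := by rw [ZMod.val_add, ZMod.val_one]
  by_cases hw : a.val + 1 < n
  · rw [Nat.mod_eq_of_lt hw] at hb
    by_cases hsk : a.val % k + 1 < k
    · left
      have := (Nat.div_mod_unique (a := a.val + 1) (b := k) (d := a.val / k)
        (c := a.val % k + 1) (show 0 < k by omega)).mpr ⟨by omega, hsk⟩
      exact ⟨hsk, by rw [hb]; exact this.1, by rw [hb]; exact this.2⟩
    · right; left
      have hmul : k * (a.val / k + 1) = k * (a.val / k) + k := by ring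
      have := (Nat.div_mod_unique (a := a.val + 1) (b := k) (d := a.val / k + 1)
        (c := 0) (show 0 < k by omega)).mpr ⟨by omega, by omega⟩
      exact ⟨by omega, hw, by rw [hb]; exact this.1, by rw [hb]; exact this.2⟩
  · right; right
    have hb0 : (a+1).val = 0 := by
      rw [hb, show a.val + 1 = n by omega, Nat.mod_self]
    have hkN : k * (n/k - 1) + k = k * (n/k) := by
      rw [← Nat.mul_succ]; congr 1; omega
    have hnN : n = k * (n/k) := by rw [mul_comm]; exact hNk
    have := (Nat.div_mod_unique (a := a.val) (b := k) (d := n/k - 1)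
      (c := k - 1) (show 0 < k by omega)).mpr ⟨by omega, by omega⟩
    exact ⟨this.2, this.1, hb0⟩

lemma gp_step_k (a : ZMod n) :
    (a + (k : ZMod n)).val % k = a.val % k ∧
    GPD (n/k) ((a + (k : ZMod n)).val / k) = GPD (n/k) (a.val / k + 1) ∧
    GPD (n/k) ((a + (k : ZMod n)).val / k + 1) = GPD (n/k) (a.val / k + 2) := by
  obtain ⟨h15, hkn, hNk, hN2⟩ := gp_basic hk hn hdvd
  haveI : NeZero n := ⟨by omega⟩
  have hav : a.val < n := ZMod.val_lt a
  have hmod := Nat.div_add_mod a.val k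
  have hs : a.val % k < k := Nat.mod_lt _ (by omega)
  have hb : (a + (k : ZMod n)).val = (a.val + k) % n := by
    rw [ZMod.val_add, ZMod.val_natCast_of_lt hkn]
  by_cases hw : a.val + k < n
  · rw [Nat.mod_eq_of_lt hw] at hb
    have hmul : k * (a.val / k + 1) = k * (a.val / k) + k := by ring
    have := (Nat.div_mod_unique (a := a.val + k) (b := k) (d := a.val / k + 1)
      (c := a.val % k) (show 0 < k by omega)).mpr ⟨by omega, hs⟩
    rw [hb, this.1, this.2]
    exact ⟨rfl, rfl, rfl⟩
  · -- wraparound: a.val / k = n/k - 1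
    have hq : a.val / k = n/k - 1 := by
      have hlt : a.val / k < n / k := by
        rw [Nat.div_lt_iff_lt_mul (show 0 < k by omega), ← hNk]; exact hav
      have hge : n/k - 1 ≤ a.val / k := by
        rw [Nat.le_div_iff_mul_le (show 0 < k by omega)]
        have e1 : (n/k - 1) * k = (n/k) * k - 1 * k := Nat.sub_mul _ _ _
        omega
      omega
    have hkq : k * (a.val / k) = k * (n/k) - k := by
      rw [hq]
      have : k * (n/k - 1) + k = k * (n/k) := by rw [← Nat.mul_succ]; congr 1; omega
      omega
    have hnN : n = k * (n/k) := by rw [mul_comm]; exact hNk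
    have hbv : (a + (k : ZMod n)).val = a.val % k := by
      rw [hb, show a.val + k = (a.val % k) + n by omega, Nat.add_mod_right]
      exact Nat.mod_eq_of_lt (by omega)
    have hq0 : (a + (k : ZMod n)).val / k = 0 := by
      rw [hbv]; exact Nat.div_eq_of_lt hs
    refine ⟨by rw [hbv]; exact Nat.mod_eq_of_lt hs, ?_, ?_⟩
    · rw [hq0, hq, show n/k - 1 + 1 = n/k by omega, GPD_zero, GPD_self]
    · rw [hq0, hq, show n/k - 1 + 2 = n/k + 1 by omega, GPD_succ_self (by omega)]

end Steps

section Lip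

variable {n k : ℕ} (hk : 3 ≤ k) (hn : k * (k + 2) ≤ n) (hdvd : k ∣ n)
include hk hn hdvd

lemma GPF_step (a : ZMod n) :
    GPF n k (a+1) ≤ GPF n k a + 1 ∧ GPF n k a ≤ GPF n k (a+1) + 1 := by
  obtain ⟨h15, hkn, hNk, hN2⟩ := gp_basic hk hn hdvd
  have hlip1 := GPD_lip (n/k) (a.val/k) (by omega)
  have hlip2 := GPD_lip (n/k) (a.val/k + 1) (by omega)
  have hs : a.val % k < k := Nat.mod_lt _ (by omega)
  rcases gp_step_one hk hn hdvd a with ⟨h1, h2, h3⟩ | ⟨h1, h2, h3, h4⟩ | ⟨h1, h2, h3⟩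
  · unfold GPF; rw [h2, h3]; omega
  · unfold GPF; rw [h3, h4]; omega
  · have e2 : GPD (n/k) (a.val/k + 1) = 0 := by
      rw [h2, show n/k - 1 + 1 = n/k by omega, GPD_self]
    have e1 : GPD (n/k) (a.val/k) = 1 := by rw [h2]; exact GPD_pred (by omega)
    unfold GPF
    rw [h3, e1, e2]
    simp only [Nat.zero_div, Nat.zero_mod, GPD_zero]
    omega

lemma GPmu_step (a : ZMod n) :
    GPmu n k (a+1) ≤ GPmu n k a + 1 ∧ GPmu n k a ≤ GPmu n k (a+1) + 1 := by
  obtain ⟨h15, hkn, hNk, hN2⟩ := gp_basic hk hn hdvd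
  have hlip1 := GPD_lip (n/k) (a.val/k) (by omega)
  have hlip2 := GPD_lip (n/k) (a.val/k + 1) (by omega)
  rw [show a.val/k + 1 + 1 = a.val/k + 2 from by omega] at hlip2
  have hs : a.val % k < k := Nat.mod_lt _ (by omega)
  rcases gp_step_one hk hn hdvd a with ⟨h1, h2, h3⟩ | ⟨h1, h2, h3, h4⟩ | ⟨h1, h2, h3⟩
  · unfold GPmu
    rw [h2, h3]
    by_cases hs0 : a.val % k = 0 <;> simp [hs0] <;> omega
  · unfold GPmu
    rw [h3, h4]
    simp [show ¬ (a.val % k = 0) from by omega]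
    omega
  · have e2 : GPD (n/k) (a.val/k + 1) = 0 := by
      rw [h2, show n/k - 1 + 1 = n/k by omega, GPD_self]
    have e1 : GPD (n/k) (a.val/k) = 1 := by rw [h2]; exact GPD_pred (by omega)
    unfold GPmu
    rw [h3]
    simp [show ¬ (a.val % k = 0) from by omega, e1, e2, GPD_zero]

lemma GPpsi_inner_step (a : ZMod n) :
    GPpsi n k (.inr (a + (k : ZMod n))) ≤ GPpsi n k (.inr a) + 1 ∧
    GPpsi n k (.inr a) ≤ GPpsi n k (.inr (a + (k : ZMod n))) + 1 := by
  obtain ⟨h15, hkn, hNk, hN2⟩ := gp_basic hk hn hdvd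
  have hlip1 := GPD_lip (n/k) (a.val/k) (by omega)
  have hlip2 := GPD_lip (n/k) (a.val/k + 1) (by omega)
  rw [show a.val/k + 1 + 1 = a.val/k + 2 from by omega] at hlip2
  have hs : a.val % k < k := Nat.mod_lt _ (by omega)
  obtain ⟨hsb, hD1, hD2⟩ := gp_step_k hk hn hdvd a
  simp only [GPpsi]
  unfold GPF
  rw [hsb, hD1, hD2]
  by_cases hs0 : a.val % k = 0 <;> simp only [hs0, if_pos, if_neg, ite_true, ite_false,
    eq_self_iff_true, if_true, if_false]
  · omega
  · omega

lemma GPmu_inner_step (a : ZMod n) :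
    GPmu n k (a + (k : ZMod n)) ≤ GPmu n k a + 1 ∧
    GPmu n k a ≤ GPmu n k (a + (k : ZMod n)) + 1 := by
  obtain ⟨h15, hkn, hNk, hN2⟩ := gp_basic hk hn hdvd
  have hlip1 := GPD_lip (n/k) (a.val/k) (by omega)
  have hlip2 := GPD_lip (n/k) (a.val/k + 1) (by omega)
  rw [show a.val/k + 1 + 1 = a.val/k + 2 from by omega] at hlip2
  obtain ⟨hsb, hD1, hD2⟩ := gp_step_k hk hn hdvd a
  unfold GPmu
  rw [hsb, hD1, hD2]
  by_cases hs0 : a.val % k = 0 <;> simp only [hs0, ite_true, ite_false,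
    eq_self_iff_true, if_true, if_false]
  · omega
  · omega

lemma GPpsi_lip : ∀ ⦃x y⦄, (genPetersen n k).Adj x y → GPpsi n k x ≤ GPpsi n k y + 1 := by
  obtain ⟨h15, hkn, hNk, hN2⟩ := gp_basic hk hn hdvd
  intro x y hxy
  rw [genPetersen, SimpleGraph.fromRel_adj] at hxy
  obtain ⟨hne, hrel⟩ := hxy
  rcases x with a | a <;> rcases y with b | b
  · rcases hrel with h | h
    · subst h
      have := (GPF_step hk hn hdvd a).2
      simp only [GPpsi]; omega
    · subst h
      have := (GPF_step hk hn hdvd b).1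
      simp only [GPpsi]; omega
  · rcases hrel with h | h
    · subst h
      simp only [GPpsi]
      by_cases hs0 : a.val % k = 0
      · rw [if_pos hs0]
        have h1 : GPF n k a ≤ GPD (n/k) (a.val/k) + a.val % k := min_le_left _ _
        omega
      · rw [if_neg hs0]; omega
    · exact h.elim
  · rcases hrel with h | h
    · exact h.elim
    · subst h
      simp only [GPpsi]
      by_cases hs0 : b.val % k = 0
      · rw [if_pos hs0]
        have hl := (GPD_lip (n/k) (b.val/k) (by omega)).2
        unfold GPF
        rw [hs0]
        omega
      · rw [if_neg hs0]
  · rcases hrel with h | h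
    · subst h
      exact (GPpsi_inner_step hk hn hdvd a).2
    · subst h
      exact (GPpsi_inner_step hk hn hdvd b).1

lemma GPphi_lip : ∀ ⦃x y⦄, (genPetersen n k).Adj x y → GPphi n k x ≤ GPphi n k y + 1 := by
  intro x y hxy
  rw [genPetersen, SimpleGraph.fromRel_adj] at hxy
  obtain ⟨hne, hrel⟩ := hxy
  rcases x with a | a <;> rcases y with b | b
  · rcases hrel with h | h
    · subst h
      have := (GPmu_step hk hn hdvd a).2
      simp only [GPphi]; omega
    · subst h
      have := (GPmu_step hk hn hdvd b).1
      simp only [GPphi]; omega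
  · rcases hrel with h | h
    · subst h; simp only [GPphi]; omega
    · exact h.elim
  · rcases hrel with h | h
    · exact h.elim
    · subst h; simp only [GPphi]; omega
  · rcases hrel with h | h
    · subst h
      have := (GPmu_inner_step hk hn hdvd a).2
      simp only [GPphi]; omega
    · subst h
      have := (GPmu_inner_step hk hn hdvd b).1
      simp only [GPphi]; omega

end Lip


theorem stmt_12 (n k : ℕ) (hk : 3 ≤ k) (hn : k * (k + 2) ≤ n) (hdvd : k ∣ n) :
    (∀ i : ℕ, i ≤ n / k - 1 →
      Sum.inr (((i * k : ℕ) : ZMod n)) ∈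
        closerSet (genPetersen n k) (Sum.inr 0) (Sum.inl 0)) ∧
    (∀ j : ℕ, j < n → ¬ k ∣ j →
      Sum.inr ((j : ZMod n)) ∈ closerSet (genPetersen n k) (Sum.inl 0) (Sum.inr 0)) := by
  obtain ⟨h15, hkn, hNk, hN2⟩ := gp_basic hk hn hdvd
  haveI : NeZero n := ⟨by omega⟩
  have hn1 : 1 < n := by omega
  have hk0 : 0 < k := by omega
  have hpsi0 : GPpsi n k (Sum.inr (0 : ZMod n)) = 0 := by
    simp [GPpsi, ZMod.val_zero, Nat.zero_mod, Nat.zero_div, GPD_zero]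
  have hphi0 : GPphi n k (Sum.inl (0 : ZMod n)) = 0 := by
    simp [GPphi, GPmu, ZMod.val_zero, Nat.zero_mod, Nat.zero_div, GPD_zero]
  constructor
  · -- inner multiples are closer to v₀
    intro i hi
    simp only [closerSet, Set.mem_setOf_eq]
    have hik_lt : i * k < n := by
      have h1 : i * k ≤ (n/k - 1) * k := Nat.mul_le_mul_right k hi
      have h2 : (n/k - 1) * k = (n/k) * k - 1 * k := Nat.sub_mul _ _ _
      omega
    have hval : ((i * k : ℕ) : ZMod n).val = i * k := ZMod.val_natCast_of_lt hik_lt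
    have hq : (i * k) / k = i := Nat.mul_div_cancel i hk0
    have hsm : (i * k) % k = 0 := Nat.mul_mod_left i k
    -- upper bound for dist to v₀
    have hub1 : (genPetersen n k).dist (Sum.inr ((i*k : ℕ) : ZMod n)) (Sum.inr 0) ≤ i := by
      rw [SimpleGraph.dist_comm]
      exact gp_dist_inner_le hk0 hkn _ _ i (by rw [zero_add])
    have hub2 : (genPetersen n k).dist (Sum.inr ((i*k : ℕ) : ZMod n)) (Sum.inr 0) ≤ n/k - i := by
      refine gp_dist_inner_le hk0 hkn _ _ (n/k - i) ?_
      have e1 : (n/k - i) * k = (n/k) * k - i * k := Nat.sub_mul _ _ _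
      have e2 : i * k + (n/k - i) * k = n := by omega
      rw [← Nat.cast_add, e2, ZMod.natCast_self]
    -- lower bound for dist to u₀
    have hreach : (genPetersen n k).Reachable (Sum.inr ((i*k : ℕ) : ZMod n)) (Sum.inl 0) :=
      (gp_reach0 hn1 hk0 hkn _).symm
    have hlb := pot_dist (GPphi_lip hk hn hdvd) hreach
    have hphiv : GPphi n k (Sum.inr ((i*k : ℕ) : ZMod n)) = GPD (n/k) i + 1 := by
      simp only [GPphi, GPmu, hval, hq, hsm, eq_self_iff_true, if_true]
    have hDi : GPD (n/k) i = min i (n/k - i) := GPD_lt (by omega)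
    omega
  · -- other inner vertices are closer to u₀
    intro j hjn hjk
    simp only [closerSet, Set.mem_setOf_eq]
    have hval : ((j : ℕ) : ZMod n).val = j := ZMod.val_natCast_of_lt hjn
    have hs0 : j % k ≠ 0 := fun h => hjk (Nat.dvd_of_mod_eq_zero h)
    have hmod := Nat.div_add_mod j k
    have hsk : j % k < k := Nat.mod_lt _ (by omega)
    have hqN : j / k < n / k := by
      rw [Nat.div_lt_iff_lt_mul hk0, ← hNk]; exact hjn
    have hc : (j/k) * k = k * (j/k) := Nat.mul_comm _ _
    have hconn := gp_connected (n := n) (k := k) hn1 hk0 hkn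
    -- four upper bounds on dist (inl 0) (inr j)
    have m1 : (genPetersen n k).dist (Sum.inl (0:ZMod n)) (Sum.inl ((j % k : ℕ) : ZMod n)) ≤ j % k :=
      gp_dist_outer_le hn1 _ _ _ (by rw [zero_add])
    have sp1 : (genPetersen n k).dist (Sum.inl ((j % k : ℕ) : ZMod n)) (Sum.inr ((j % k : ℕ) : ZMod n)) ≤ 1 :=
      gp_dist_spoke _
    have in1a : (genPetersen n k).dist (Sum.inr ((j % k : ℕ) : ZMod n)) (Sum.inr ((j:ℕ) : ZMod n)) ≤ j/k := by
      refine gp_dist_inner_le hk0 hkn _ _ (j/k) ?_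
      rw [← Nat.cast_add, show j % k + (j/k) * k = j from by omega]
    have in1b : (genPetersen n k).dist (Sum.inr ((j % k : ℕ) : ZMod n)) (Sum.inr ((j:ℕ) : ZMod n)) ≤ n/k - j/k := by
      rw [SimpleGraph.dist_comm]
      refine gp_dist_inner_le hk0 hkn _ _ (n/k - j/k) ?_
      have e1 : (n/k - j/k) * k = (n/k) * k - (j/k) * k := Nat.sub_mul _ _ _
      have e2 : j + (n/k - j/k) * k = j % k + n := by omega
      rw [← Nat.cast_add, e2, Nat.cast_add, ZMod.natCast_self, add_zero]
    -- second midpoint : s - k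
    have hZ : ((j % k : ℕ) : ZMod n) + ((j/k : ℕ) : ZMod n) * ((k : ℕ) : ZMod n) = ((j : ℕ) : ZMod n) := by
      have : ((j % k + j/k * k : ℕ) : ZMod n) = ((j : ℕ) : ZMod n) := by
        rw [show j % k + (j/k) * k = j from by omega]
      push_cast at this
      linear_combination this
    have m2 : (genPetersen n k).dist (Sum.inl (0:ZMod n))
        (Sum.inl (((j % k : ℕ) : ZMod n) - ((k:ℕ) : ZMod n))) ≤ k - j % k := by
      rw [SimpleGraph.dist_comm]
      refine gp_dist_outer_le hn1 _ _ (k - j % k) ?_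
      rw [Nat.cast_sub (le_of_lt hsk)]
      ring_nf
    have sp2 : (genPetersen n k).dist (Sum.inl (((j % k : ℕ) : ZMod n) - ((k:ℕ) : ZMod n)))
        (Sum.inr (((j % k : ℕ) : ZMod n) - ((k:ℕ) : ZMod n))) ≤ 1 := gp_dist_spoke _
    have in2a : (genPetersen n k).dist (Sum.inr (((j % k : ℕ) : ZMod n) - ((k:ℕ) : ZMod n)))
        (Sum.inr ((j:ℕ) : ZMod n)) ≤ j/k + 1 := by
      refine gp_dist_inner_le hk0 hkn _ _ (j/k + 1) ?_
      push_cast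
      linear_combination -hZ
    have in2b : (genPetersen n k).dist (Sum.inr (((j % k : ℕ) : ZMod n) - ((k:ℕ) : ZMod n)))
        (Sum.inr ((j:ℕ) : ZMod n)) ≤ n/k - j/k - 1 := by
      rw [SimpleGraph.dist_comm]
      refine gp_dist_inner_le hk0 hkn _ _ (n/k - j/k - 1) ?_
      have e0 : (j/k + 1) * k = (j/k) * k + k := Nat.succ_mul _ _
      have e0' : (j/k + 1) * k ≤ (n/k) * k := Nat.mul_le_mul_right k (by omega)
      have e1 : (n/k - j/k - 1) * k = (n/k - j/k) * k - 1 * k := Nat.sub_mul _ _ _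
      have e1' : (n/k - j/k) * k = (n/k) * k - (j/k) * k := Nat.sub_mul _ _ _
      have e2 : j + (n/k - j/k - 1) * k = j % k + (n - k) := by omega
      have e3 : ((j + (n/k - j/k - 1) * k : ℕ) : ZMod n) = ((j % k + (n - k) : ℕ) : ZMod n) := by
        rw [e2]
      push_cast [Nat.cast_sub (show k ≤ n from by omega)] at e3
      rw [ZMod.natCast_self] at e3
      push_cast
      linear_combination -e3
    -- combine upper bounds via triangle inequality
    have t2 : (genPetersen n k).dist (Sum.inl ((j % k : ℕ) : ZMod n)) (Sum.inr ((j:ℕ) : ZMod n)) ≤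
        1 + min (j/k) (n/k - j/k) := by
      have htr := hconn.dist_triangle (u := Sum.inl ((j % k : ℕ) : ZMod n))
        (v := Sum.inr ((j % k : ℕ) : ZMod n)) (w := Sum.inr ((j:ℕ) : ZMod n))
      have := le_min in1a in1b
      omega
    have t1 : (genPetersen n k).dist (Sum.inl (0:ZMod n)) (Sum.inr ((j:ℕ) : ZMod n)) ≤
        j % k + (1 + min (j/k) (n/k - j/k)) := by
      have htr := hconn.dist_triangle (u := Sum.inl (0:ZMod n))
        (v := Sum.inl ((j % k : ℕ) : ZMod n)) (w := Sum.inr ((j:ℕ) : ZMod n))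
      omega
    have t4 : (genPetersen n k).dist (Sum.inl (((j % k : ℕ) : ZMod n) - ((k:ℕ) : ZMod n)))
        (Sum.inr ((j:ℕ) : ZMod n)) ≤ 1 + min (j/k + 1) (n/k - j/k - 1) := by
      have htr := hconn.dist_triangle (u := Sum.inl (((j % k : ℕ) : ZMod n) - ((k:ℕ) : ZMod n)))
        (v := Sum.inr (((j % k : ℕ) : ZMod n) - ((k:ℕ) : ZMod n))) (w := Sum.inr ((j:ℕ) : ZMod n))
      have := le_min in2a in2b
      omega
    have t3 : (genPetersen n k).dist (Sum.inl (0:ZMod n)) (Sum.inr ((j:ℕ) : ZMod n)) ≤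
        (k - j % k) + (1 + min (j/k + 1) (n/k - j/k - 1)) := by
      have htr := hconn.dist_triangle (u := Sum.inl (0:ZMod n))
        (v := Sum.inl (((j % k : ℕ) : ZMod n) - ((k:ℕ) : ZMod n))) (w := Sum.inr ((j:ℕ) : ZMod n))
      omega
    -- lower bound for dist to v₀ via potential
    have hreach : (genPetersen n k).Reachable (Sum.inr ((j:ℕ) : ZMod n)) (Sum.inr (0:ZMod n)) :=
      ((gp_reach0 hn1 hk0 hkn _).symm).trans (gp_reach0 hn1 hk0 hkn _)
    have hlb := pot_dist (GPpsi_lip hk hn hdvd) hreach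
    have hpsiv : GPpsi n k (Sum.inr ((j:ℕ) : ZMod n)) =
        min (GPD (n/k) (j/k) + j % k) (GPD (n/k) (j/k + 1) + (k - j % k)) + 2 := by
      simp [GPpsi, GPF, hval, hs0]
    have hD1 : GPD (n/k) (j/k) = min (j/k) (n/k - j/k) := GPD_lt hqN
    have hD2 : GPD (n/k) (j/k + 1) = min (j/k + 1) (n/k - (j/k + 1)) := by
      rcases eq_or_lt_of_le (show j/k + 1 ≤ n/k from hqN) with h | h
      · rw [h, GPD_self]; omega
      · rw [GPD_lt h]
    rw [show (genPetersen n k).dist (Sum.inr ((j:ℕ) : ZMod n)) (Sum.inl (0:ZMod n)) =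
      (genPetersen n k).dist (Sum.inl (0:ZMod n)) (Sum.inr ((j:ℕ) : ZMod n)) from
        SimpleGraph.dist_comm]
    omega
end
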